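/- arXiv:1904.03466 — 7 statements merged into one kernel-verified Lean document; each statement's English description precedes it below -/
import Mathlib

section
/- Let p and ℓ be distinct prime numbers. Then γ_p(ℚ) ⊆ ℤ_(ℓ) if and only if neither of the polynomials X^p − X + 1 and X^p − X − 1 has a zero in the finite field 𝔽_ℓ. -/
/-- The image `γ_p(ℚ)` of the Kochen operator
`γ_p(X) = (1/p)·(X^p - X)/((X^p - X)² - 1) ∈ ℚ(X)` on `ℚ` minus its poles. -/
def gammaImage (p : ℕ) : Set ℚ :=
  {y | ∃ x : ℚ, (x ^ p - x) ^ 2 - 1 ≠ 0 ∧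
    (p : ℚ)⁻¹ * ((x ^ p - x) / ((x ^ p - x) ^ 2 - 1)) = y}

/-- The localization `ℤ_(ℓ)` of `ℤ` at the prime `ℓ`, viewed as the set of rational numbers
of nonnegative `ℓ`-adic valuation (i.e. with denominator prime to `ℓ`). -/
def Zloc (ℓ : ℕ) : Set ℚ := {x | ¬ ℓ ∣ x.den}

section helpers

variable {L : ℕ} [hL : Fact L.Prime]

lemma not_dvd_den_iff {q : ℚ} (hq : q ≠ 0) :
    ¬ L ∣ q.den ↔ 0 ≤ padicValRat L q := by
  rw [padicValRat_def]
  constructor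
  · intro h
    rw [padicValNat.eq_zero_of_not_dvd h]
    simp
  · intro h hdvd
    have hnum : ¬ (L : ℤ) ∣ q.num := by
      intro hn
      have h1 : L ∣ q.num.natAbs := Int.natCast_dvd_natCast.mp (by
        rwa [Int.dvd_natAbs])
      have h2 : L ∣ Nat.gcd q.num.natAbs q.den := Nat.dvd_gcd h1 hdvd
      rw [q.reduced] at h2
      exact hL.out.one_lt.ne' (Nat.dvd_one.mp h2)
    have hv1 : padicValInt L q.num = 0 := padicValInt.eq_zero_of_not_dvd hnum
    have hv2 : 1 ≤ padicValNat L q.den :=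
      one_le_padicValNat_of_dvd q.pos.ne' hdvd
    rw [hv1] at h
    omega

lemma ratCast_zmod_eq_zero_iff {q : ℚ} (hden : ¬ L ∣ q.den) :
    ((q : ZMod L) = 0) ↔ (L : ℤ) ∣ q.num := by
  have hd : ((q.den : ZMod L)) ≠ 0 := by
    rw [Ne, ZMod.natCast_eq_zero_iff]
    exact hden
  rw [Rat.cast_def, div_eq_zero_iff]
  simp [hd, ZMod.intCast_zmod_eq_zero_iff_dvd]

lemma pos_val_iff_cast_zero {q : ℚ} (hq : q ≠ 0) (hden : ¬ L ∣ q.den) :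
    0 < padicValRat L q ↔ ((q : ZMod L) = 0) := by
  rw [ratCast_zmod_eq_zero_iff hden, padicValRat_def,
    padicValNat.eq_zero_of_not_dvd hden]
  have hnum : q.num ≠ 0 := Rat.num_ne_zero.mpr hq
  rw [show (L : ℤ) ∣ q.num ↔ (L : ℤ) ^ 1 ∣ q.num by rw [pow_one],
    padicValInt_dvd_iff]
  simp only [hnum, false_or, Nat.cast_zero, sub_zero]
  omega

end helpers

/-- **Lemma.**  Let `p` and `ℓ` be distinct primes.  Then `γ_p(ℚ) ⊆ ℤ_(ℓ)` if and only if
neither `X^p - X + 1` nor `X^p - X - 1` has a zero in `𝔽_ℓ`. -/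
theorem gammaImage_subset_Zloc_iff (p ℓ : ℕ) (hp : p.Prime) (hℓ : ℓ.Prime) (hne : p ≠ ℓ) :
    gammaImage p ⊆ Zloc ℓ ↔
      (∀ a : ZMod ℓ, a ^ p - a + 1 ≠ 0) ∧ (∀ a : ZMod ℓ, a ^ p - a - 1 ≠ 0) := by
  haveI : Fact p.Prime := ⟨hp⟩
  haveI : Fact ℓ.Prime := ⟨hℓ⟩
  have hℓp : ¬ ℓ ∣ p := by
    rw [Nat.prime_dvd_prime_iff_eq hℓ hp]
    exact fun h => hne h.symm
  have hvp : padicValRat ℓ (p : ℚ) = 0 := by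
    rw [padicValRat.of_nat, padicValNat.eq_zero_of_not_dvd hℓp]
    simp
  have hp0 : (p : ℚ) ≠ 0 := Nat.cast_ne_zero.mpr hp.pos.ne'
  constructor
  · intro hsub
    have key : ∀ s : ℤ, (s = 1 ∨ s = -1) → ∀ a : ZMod ℓ, a ^ p - a ≠ (s : ZMod ℓ) := by
      intro s hs a ha
      set m : ℤ := (a.val : ℤ) with hmdef
      set n : ℤ := m ^ p - m with hndef
      have hma : ((m : ZMod ℓ)) = a := by
        rw [hmdef, Int.cast_natCast, ZMod.natCast_rightInverse a]
      have hna : ((n : ZMod ℓ)) = (s : ZMod ℓ) := by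
        rw [hndef]
        push_cast
        rw [hma, ha]
      have hs0 : ((s : ZMod ℓ)) ≠ 0 := by
        rcases hs with rfl | rfl <;> simp
      have hnn : ¬ (ℓ : ℤ) ∣ n := by
        rw [← ZMod.intCast_zmod_eq_zero_iff_dvd, hna]
        exact hs0
      have hn0 : n ≠ 0 := by
        intro h
        exact hnn (by rw [h]; exact dvd_zero _)
      have hd : (ℓ : ℤ) ∣ n ^ 2 - 1 := by
        rw [← ZMod.intCast_zmod_eq_zero_iff_dvd]
        push_cast
        rw [hna]
        rcases hs with rfl | rfl <;> norm_num
      have hmp : m ^ p = m * m ^ (p - 1) := by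
        conv_lhs => rw [← Nat.sub_add_cancel hp.one_lt.le]
        rw [pow_succ']
      have hmn : m ∣ n := ⟨m ^ (p - 1) - 1, by rw [hndef, mul_sub, mul_one, ← hmp]⟩
      have hd0 : n ^ 2 - 1 ≠ 0 := by
        intro h
        have hsq : n * n = 1 := by nlinarith [sq_nonneg n]
        have hu : IsUnit n := IsUnit.of_mul_eq_one n hsq
        have hum : IsUnit m := isUnit_of_dvd_unit hmn hu
        have hm0 : (0 : ℤ) ≤ m := by rw [hmdef]; exact Int.natCast_nonneg _
        have hm1 : m = 1 := by
          rcases Int.isUnit_iff.mp hum with h1 | h1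
          · exact h1
          · omega
        rw [hndef, hm1] at hn0
        simp at hn0
      set x : ℚ := (m : ℚ) with hxdef
      have ht : x ^ p - x = ((n : ℤ) : ℚ) := by
        rw [hxdef, hndef]
        push_cast
        ring
      have hdq : (x ^ p - x) ^ 2 - 1 = ((n ^ 2 - 1 : ℤ) : ℚ) := by
        rw [ht]
        push_cast
        ring
      have hdq0 : (x ^ p - x) ^ 2 - 1 ≠ 0 := by
        rw [hdq]
        exact_mod_cast hd0
      have hy : (p : ℚ)⁻¹ * ((x ^ p - x) / ((x ^ p - x) ^ 2 - 1)) ∈ Zloc ℓ :=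
        hsub ⟨x, hdq0, rfl⟩
      have ht0 : x ^ p - x ≠ 0 := by
        rw [ht]
        exact_mod_cast hn0
      have hy0 : (p : ℚ)⁻¹ * ((x ^ p - x) / ((x ^ p - x) ^ 2 - 1)) ≠ 0 :=
        mul_ne_zero (inv_ne_zero hp0) (div_ne_zero ht0 hdq0)
      have hvy := (not_dvd_den_iff hy0).mp hy
      rw [padicValRat.mul (inv_ne_zero hp0) (div_ne_zero ht0 hdq0),
        padicValRat.inv, hvp, padicValRat.div ht0 hdq0, hdq, ht,
        padicValRat.of_int, padicValRat.of_int] at hvy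
      have h1 : padicValInt ℓ n = 0 := padicValInt.eq_zero_of_not_dvd hnn
      have h2 : 1 ≤ padicValInt ℓ (n ^ 2 - 1) := by
        have := (padicValInt_dvd_iff 1 (n ^ 2 - 1)).mp (by simpa using hd)
        rcases this with h | h
        · exact absurd h hd0
        · exact h
      rw [h1] at hvy
      push_cast at hvy
      omega
    constructor
    · intro a h
      exact key (-1) (Or.inr rfl) a (by push_cast; linear_combination h)
    · intro a h
      exact key 1 (Or.inl rfl) a (by push_cast; linear_combination h)
  · rintro ⟨hA, hB⟩ y ⟨x, hd0, rfl⟩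
    set t : ℚ := x ^ p - x with htdef
    by_cases ht0 : t = 0
    · have : (p : ℚ)⁻¹ * (t / (t ^ 2 - 1)) = 0 := by rw [ht0]; simp
      rw [this]
      show ¬ ℓ ∣ (0 : ℚ).den
      simp [Rat.den_ofNat, Nat.dvd_one, hℓ.one_lt.ne']
    have hx0 : x ≠ 0 := by
      rintro rfl
      exact ht0 (by rw [htdef]; simp [hp.pos.ne'])
    have hy0 : (p : ℚ)⁻¹ * (t / (t ^ 2 - 1)) ≠ 0 :=
      mul_ne_zero (inv_ne_zero hp0) (div_ne_zero ht0 hd0)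
    show ¬ ℓ ∣ _
    rw [not_dvd_den_iff hy0, padicValRat.mul (inv_ne_zero hp0) (div_ne_zero ht0 hd0),
      padicValRat.inv, hvp, padicValRat.div ht0 hd0]
    simp only [neg_zero, zero_add, sub_nonneg]
    -- goal: padicValRat ℓ (t^2-1) ≤ padicValRat ℓ t
    have hxp : x ^ p ≠ 0 := pow_ne_zero _ hx0
    have hvxp : padicValRat ℓ (x ^ p) = p * padicValRat ℓ x := padicValRat.pow x
    have htadd : t = x ^ p + (-x) := by rw [htdef]; ring
    have hp2 : (2 : ℤ) ≤ (p : ℤ) := by exact_mod_cast hp.two_le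
    rcases lt_or_ge (padicValRat ℓ x) 0 with hvx | hvx
    · have hvt : padicValRat ℓ t = p * padicValRat ℓ x := by
        rw [htadd, padicValRat.add_eq_of_lt (by rwa [← htadd]) hxp (neg_ne_zero.mpr hx0)
          (by rw [hvxp, padicValRat.neg]; nlinarith)]
        exact hvxp
      have hvd : padicValRat ℓ (t ^ 2 - 1) = 2 * (p * padicValRat ℓ x) := by
        rw [show t ^ 2 - 1 = t ^ 2 + (-1) by ring,
          padicValRat.add_eq_of_lt (by rw [show t ^ 2 + (-1 : ℚ) = t ^ 2 - 1 by ring]; exact hd0)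
            (pow_ne_zero _ ht0) (by norm_num)
            (by rw [padicValRat.pow t, hvt, padicValRat.neg, padicValRat.one]; push_cast; nlinarith),
          padicValRat.pow t, hvt]
        push_cast
        ring
      rw [hvd, hvt]
      nlinarith
    · have hvt : 0 ≤ padicValRat ℓ t := by
        have hmin := padicValRat.min_le_padicValRat_add (p := ℓ) (q := x ^ p) (r := -x)
          (by rwa [← htadd])
        rw [← htadd, hvxp, padicValRat.neg] at hmin
        have : (0 : ℤ) ≤ min ((p : ℤ) * padicValRat ℓ x) (padicValRat ℓ x) := by
          apply le_min <;> nlinarith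
        linarith
      rcases eq_or_lt_of_le hvt with hvt0 | hvtpos
      · -- v t = 0
        have hm1 : t - 1 ≠ 0 := by
          intro h
          apply hd0
          have : t = 1 := by linarith [sub_eq_zero.mp h]
          rw [this]; ring
        have hp1 : t + 1 ≠ 0 := by
          intro h
          apply hd0
          have : t = -1 := by linarith [eq_neg_of_add_eq_zero_left h]
          rw [this]; ring
        have hone : padicValRat ℓ (1 : ℚ) = 0 := padicValRat.one
        have hnegone : padicValRat ℓ (-1 : ℚ) = 0 := by
          rw [padicValRat.neg, padicValRat.one]
        have hvm : 0 ≤ padicValRat ℓ (t - 1) := by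
          have := padicValRat.min_le_padicValRat_add (p := ℓ) (q := t) (r := -1)
            (by rw [show t + (-1 : ℚ) = t - 1 by ring]; exact hm1)
          rw [show t + (-1 : ℚ) = t - 1 by ring, hnegone, ← hvt0] at this
          simpa using this
        have hvp1 : 0 ≤ padicValRat ℓ (t + 1) := by
          have := padicValRat.min_le_padicValRat_add (p := ℓ) (q := t) (r := 1) hp1
          rw [hone, ← hvt0] at this
          simpa using this
        have hxdz : ((x.den : ZMod ℓ)) ≠ 0 := by
          rw [Ne, ZMod.natCast_eq_zero_iff]
          exact (not_dvd_den_iff hx0).mpr hvx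
        have htdz : ((t.den : ZMod ℓ)) ≠ 0 := by
          rw [Ne, ZMod.natCast_eq_zero_iff]
          exact (not_dvd_den_iff ht0).mpr hvt
        have hxpdz : (((x ^ p : ℚ).den : ZMod ℓ)) ≠ 0 := by
          rw [Ne, ZMod.natCast_eq_zero_iff]
          refine (not_dvd_den_iff hxp).mpr ?_
          rw [hvxp]
          positivity
        have honedz : (((1 : ℚ).den : ZMod ℓ)) ≠ 0 := by
          norm_num
        have hcast_t : ((t : ℚ) : ZMod ℓ) = (x : ZMod ℓ) ^ p - (x : ZMod ℓ) := by
          rw [htdef, Rat.cast_sub_of_ne_zero hxpdz hxdz, Rat.cast_pow]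
        have hcast_m : ((t - 1 : ℚ) : ZMod ℓ) = (x : ZMod ℓ) ^ p - (x : ZMod ℓ) - 1 := by
          rw [Rat.cast_sub_of_ne_zero htdz honedz, Rat.cast_one, hcast_t]
        have hcast_p : ((t + 1 : ℚ) : ZMod ℓ) = (x : ZMod ℓ) ^ p - (x : ZMod ℓ) + 1 := by
          rw [Rat.cast_add_of_ne_zero htdz honedz, Rat.cast_one, hcast_t]
        have e1 : padicValRat ℓ (t - 1) = 0 := by
          rcases eq_or_lt_of_le hvm with h | h
          · exact h.symm
          · exfalso
            have hden : ¬ ℓ ∣ (t - 1).den := (not_dvd_den_iff hm1).mpr h.le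
            have hc := (pos_val_iff_cast_zero hm1 hden).mp h
            apply hB (x : ZMod ℓ)
            rw [← hcast_m]
            exact hc
        have e2 : padicValRat ℓ (t + 1) = 0 := by
          rcases eq_or_lt_of_le hvp1 with h | h
          · exact h.symm
          · exfalso
            have hden : ¬ ℓ ∣ (t + 1).den := (not_dvd_den_iff hp1).mpr h.le
            have hc := (pos_val_iff_cast_zero hp1 hden).mp h
            apply hA (x : ZMod ℓ)
            rw [← hcast_p]
            exact hc
        have hfac : t ^ 2 - 1 = (t - 1) * (t + 1) := by ring
        rw [hfac, padicValRat.mul hm1 hp1, e1, e2, ← hvt0]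
        norm_num
      · -- v t > 0
        have hvd : padicValRat ℓ (t ^ 2 - 1) = 0 := by
          rw [show t ^ 2 - 1 = (-1) + t ^ 2 by ring,
            padicValRat.add_eq_of_lt
              (by rw [show (-1 : ℚ) + t ^ 2 = t ^ 2 - 1 by ring]; exact hd0)
              (by norm_num) (pow_ne_zero _ ht0)
              (by rw [padicValRat.neg, padicValRat.one, padicValRat.pow t]; positivity),
            padicValRat.neg, padicValRat.one]
        rw [hvd]
        exact hvt
end

section
/- For every prime number p, the subring ℤ[γ_p(ℚ)] of ℚ generated by the image γ_p(ℚ) of the Kochen operator is strictly contained in ℤ_(p); that is, ℤ[γ_p(ℚ)] ⊆ ℤ_(p) and ℤ[γ_p(ℚ)] ≠ ℤ_(p). -/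
section Aux

variable {ℓ : ℕ} [Fact ℓ.Prime]

/-- In `ZMod 2`, every element is idempotent under any positive power. -/
lemma aux_pow_zmod_two (p : ℕ) (hp : 1 ≤ p) (a : ZMod 2) : a ^ p = a := by
  have h2 : a * a = a := by revert a; decide
  obtain ⟨n, rfl⟩ := Nat.exists_eq_add_of_le hp
  clear hp
  induction n with
  | zero => simp
  | succ n ih =>
    rw [show 1 + (n + 1) = (1 + n) + 1 from by omega, pow_succ, ih, h2]

lemma aux_norm_natCast_eq_one {n : ℕ} (h : ¬ ℓ ∣ n) : ‖(n : ℚ_[ℓ])‖ = 1 := by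
  have h1 : ¬ ‖((n : ℤ) : ℚ_[ℓ])‖ < 1 := by
    rw [Padic.norm_intCast_lt_one_iff]
    exact_mod_cast h
  have h2 := Padic.norm_int_le_one (p := ℓ) (n : ℤ)
  push_cast at h1 h2 ⊢
  exact le_antisymm h2 (not_lt.mp h1)

lemma aux_toZMod_zero_of_norm_lt_one {w : ℤ_[ℓ]} (h : ‖w‖ < 1) :
    PadicInt.toZMod w = 0 := by
  rw [← RingHom.mem_ker, PadicInt.ker_toZMod, PadicInt.maximalIdeal_eq_span_p,
    Ideal.mem_span_singleton]
  exact (PadicInt.norm_lt_one_iff_dvd w).mp h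

lemma aux_norm_res_eq_one {p : ℕ} (hC : ∀ a : ZMod ℓ, (a ^ p - a) ^ 2 ≠ 1) (z : ℤ_[ℓ]) :
    ‖((z ^ p - z) ^ 2 - 1 : ℤ_[ℓ])‖ = 1 := by
  rcases lt_or_eq_of_le (PadicInt.norm_le_one ((z ^ p - z) ^ 2 - 1)) with h | h
  · exfalso
    have h0 := aux_toZMod_zero_of_norm_lt_one h
    rw [map_sub, map_one, map_pow, map_sub, map_pow, sub_eq_zero] at h0
    exact hC (PadicInt.toZMod z) h0
  · exact h

lemma aux_norm_frob_le (z : ℤ_[ℓ]) : ‖(z ^ ℓ - z : ℤ_[ℓ])‖ ≤ (ℓ : ℝ)⁻¹ := by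
  have h1 : ‖(z ^ ℓ - z : ℤ_[ℓ])‖ < 1 := by
    rw [PadicInt.norm_lt_one_iff_dvd, ← Ideal.mem_span_singleton,
      ← PadicInt.maximalIdeal_eq_span_p, ← PadicInt.ker_toZMod, RingHom.mem_ker,
      map_sub, map_pow, ZMod.pow_card, sub_self]
  have h2 := (PadicInt.norm_le_pow_iff_norm_lt_pow_add_one (z ^ ℓ - z) (-1)).mpr
    (by simpa using h1)
  simpa [zpow_neg_one] using h2

lemma aux_norm_big {p : ℕ} (hp : 2 ≤ p) (x : ℚ_[ℓ]) (hx : 1 < ‖x‖) :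
    ‖x ^ p - x‖ = ‖x‖ ^ p ∧ (ℓ : ℝ) ≤ ‖x‖ := by
  have hlt : ‖x‖ < ‖x‖ ^ p := by
    have := pow_lt_pow_right₀ hx (by omega : 1 < p)
    simpa using this
  constructor
  · rw [sub_eq_add_neg, Padic.add_eq_max_of_ne (by
      rw [norm_pow, norm_neg]; exact ne_of_gt hlt)]
    rw [norm_pow, norm_neg]
    exact max_eq_left hlt.le
  · have hx0 : x ≠ 0 := by
      intro h; rw [h, norm_zero] at hx; linarith
    have hval := Padic.norm_eq_zpow_neg_valuation hx0
    have hℓ : 1 < (ℓ : ℝ) := by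
      exact_mod_cast (Fact.out : ℓ.Prime).one_lt
    have hv : 1 ≤ -x.valuation := by
      by_contra hv
      push_neg at hv
      have hv' : -x.valuation ≤ 0 := by omega
      have : ‖x‖ ≤ 1 := by
        rw [hval]
        exact zpow_le_one_of_nonpos₀ hℓ.le hv'
      linarith
    calc (ℓ : ℝ) = (ℓ : ℝ) ^ (1 : ℤ) := (zpow_one _).symm
    _ ≤ (ℓ : ℝ) ^ (-x.valuation) := zpow_le_zpow_right₀ hℓ.le hv
    _ = ‖x‖ := hval.symm

lemma aux_norm_gamma_le_p (p : ℕ) [Fact p.Prime] (x : ℚ_[p]) :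
    ‖(p : ℚ_[p])⁻¹ * ((x ^ p - x) / ((x ^ p - x) ^ 2 - 1))‖ ≤ 1 := by
  have hp : p.Prime := Fact.out
  have hp1 : 1 < (p : ℝ) := by exact_mod_cast hp.one_lt
  have hnormp : ‖(p : ℚ_[p])⁻¹‖ = (p : ℝ) := by
    rw [norm_inv, Padic.norm_p, inv_inv]
  rcases le_or_gt ‖x‖ 1 with hx | hx
  · set z : ℤ_[p] := ⟨x, hx⟩ with hzdef
    have hz : ((z ^ p - z : ℤ_[p]) : ℚ_[p]) = x ^ p - x := by push_cast; rfl
    have ht : ‖x ^ p - x‖ ≤ (p : ℝ)⁻¹ := by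
      rw [← hz, ← PadicInt.norm_def]
      exact aux_norm_frob_le z
    have ht1 : ‖x ^ p - x‖ < 1 := lt_of_le_of_lt ht (by
      rw [inv_lt_one_iff₀]; right; exact hp1)
    have hden : ‖(x ^ p - x) ^ 2 - 1‖ = 1 := by
      rw [sub_eq_add_neg, Padic.add_eq_max_of_ne, norm_neg, norm_one]
      · apply max_eq_right
        rw [norm_pow]
        nlinarith [norm_nonneg (x ^ p - x)]
      · rw [norm_pow, norm_neg, norm_one]
        nlinarith [norm_nonneg (x ^ p - x)]
    rw [norm_mul, norm_div, hden, div_one, hnormp]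
    calc (p : ℝ) * ‖x ^ p - x‖ ≤ (p : ℝ) * (p : ℝ)⁻¹ := by
          apply mul_le_mul_of_nonneg_left ht (by linarith)
    _ = 1 := mul_inv_cancel₀ (by linarith)
  · obtain ⟨hteq, hge⟩ := aux_norm_big hp.two_le x hx
    have ht1 : 1 < ‖x ^ p - x‖ := by
      rw [hteq]
      calc (1 : ℝ) < ‖x‖ := hx
      _ = ‖x‖ ^ 1 := (pow_one _).symm
      _ ≤ ‖x‖ ^ p := pow_le_pow_right₀ hx.le hp.one_le
    have htp : (p : ℝ) ≤ ‖x ^ p - x‖ := by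
      rw [hteq]
      calc (p : ℝ) = (p : ℝ) ^ 1 := (pow_one _).symm
      _ ≤ (p : ℝ) ^ p := pow_le_pow_right₀ hp1.le hp.one_le
      _ ≤ ‖x‖ ^ p := pow_le_pow_left₀ (by linarith) hge p
    have hden : ‖(x ^ p - x) ^ 2 - 1‖ = ‖x ^ p - x‖ ^ 2 := by
      rw [sub_eq_add_neg, Padic.add_eq_max_of_ne, norm_neg, norm_one, norm_pow]
      · apply max_eq_left
        nlinarith
      · rw [norm_pow, norm_neg, norm_one]
        nlinarith
    rw [norm_mul, norm_div, hden, hnormp]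
    rw [← mul_div_assoc, div_le_one (by positivity)]
    nlinarith

lemma aux_norm_gamma_le_ne (p : ℕ) (hp : p.Prime) (hne : ℓ ≠ p)
    (hC : ∀ a : ZMod ℓ, (a ^ p - a) ^ 2 ≠ 1) (x : ℚ_[ℓ]) :
    ‖(p : ℚ_[ℓ])⁻¹ * ((x ^ p - x) / ((x ^ p - x) ^ 2 - 1))‖ ≤ 1 := by
  have hℓ : ℓ.Prime := Fact.out
  have hnd : ¬ ℓ ∣ p := fun h => hne ((Nat.prime_dvd_prime_iff_eq hℓ hp).mp h)
  have hnormp : ‖(p : ℚ_[ℓ])⁻¹‖ = 1 := by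
    rw [norm_inv, aux_norm_natCast_eq_one hnd, inv_one]
  rcases le_or_gt ‖x‖ 1 with hx | hx
  · set z : ℤ_[ℓ] := ⟨x, hx⟩ with hzdef
    have hz : ((z ^ p - z : ℤ_[ℓ]) : ℚ_[ℓ]) = x ^ p - x := by push_cast; rfl
    have hz2 : (((z ^ p - z) ^ 2 - 1 : ℤ_[ℓ]) : ℚ_[ℓ]) = (x ^ p - x) ^ 2 - 1 := by
      push_cast; rfl
    have hden : ‖(x ^ p - x) ^ 2 - 1‖ = 1 := by
      rw [← hz2, ← PadicInt.norm_def]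
      exact aux_norm_res_eq_one hC z
    have ht : ‖x ^ p - x‖ ≤ 1 := by
      rw [← hz, ← PadicInt.norm_def]
      exact PadicInt.norm_le_one _
    rw [norm_mul, norm_div, hden, div_one, hnormp, one_mul]
    exact ht
  · obtain ⟨hteq, -⟩ := aux_norm_big hp.two_le x hx
    have ht1 : 1 < ‖x ^ p - x‖ := by
      rw [hteq]
      calc (1 : ℝ) < ‖x‖ := hx
      _ = ‖x‖ ^ 1 := (pow_one _).symm
      _ ≤ ‖x‖ ^ p := pow_le_pow_right₀ hx.le hp.one_le
    have hden : ‖(x ^ p - x) ^ 2 - 1‖ = ‖x ^ p - x‖ ^ 2 := by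
      rw [sub_eq_add_neg, Padic.add_eq_max_of_ne, norm_neg, norm_one, norm_pow]
      · apply max_eq_left
        nlinarith
      · rw [norm_pow, norm_neg, norm_one]
        nlinarith
    rw [norm_mul, norm_div, hden, hnormp, one_mul, div_le_one (by positivity)]
    nlinarith

/-- The unit ball of `ℚ` under the `ℓ`-adic norm, as a subring. -/
def unitBall (ℓ : ℕ) [Fact ℓ.Prime] : Subring ℚ where
  carrier := {x : ℚ | ‖((x : ℚ) : ℚ_[ℓ])‖ ≤ 1}
  one_mem' := by simp
  zero_mem' := by simp
  mul_mem' := by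
    intro a b ha hb
    simp only [Set.mem_setOf_eq, Rat.cast_mul, norm_mul] at *
    calc ‖((a : ℚ) : ℚ_[ℓ])‖ * ‖((b : ℚ) : ℚ_[ℓ])‖ ≤ 1 * 1 :=
      mul_le_mul ha hb (norm_nonneg _) zero_le_one
    _ = 1 := mul_one 1
  add_mem' := by
    intro a b ha hb
    simp only [Set.mem_setOf_eq, Rat.cast_add] at *
    exact le_trans (Padic.nonarchimedean _ _) (max_le ha hb)
  neg_mem' := by
    intro a ha
    simpa only [Set.mem_setOf_eq, Rat.cast_neg, norm_neg] using ha

lemma aux_one_lt_norm_of_dvd_den {x : ℚ} (h : ℓ ∣ x.den) : 1 < ‖((x : ℚ) : ℚ_[ℓ])‖ := by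
  have hℓ : ℓ.Prime := Fact.out
  have hnum : ¬ (ℓ : ℤ) ∣ x.num := by
    intro hd
    have h1 : ℓ ∣ x.num.natAbs := by simpa using Int.natAbs_dvd_natAbs.mpr hd
    have := Nat.Coprime.eq_one_of_dvd (Nat.Coprime.coprime_dvd_left h1 x.reduced) h
    exact hℓ.one_lt.ne' this
  have hnn : ‖((x.num : ℤ) : ℚ_[ℓ])‖ = 1 := by
    have h1 : ¬ ‖((x.num : ℤ) : ℚ_[ℓ])‖ < 1 := by
      rw [Padic.norm_intCast_lt_one_iff]; exact hnum
    exact le_antisymm (Padic.norm_int_le_one _) (not_lt.mp h1)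
  have hdd : ‖((x.den : ℕ) : ℚ_[ℓ])‖ < 1 := by
    have := (Padic.norm_intCast_lt_one_iff (p := ℓ) (k := (x.den : ℤ))).mpr
      (by exact_mod_cast h)
    push_cast at this ⊢
    exact this
  have hd0 : ((x.den : ℕ) : ℚ_[ℓ]) ≠ 0 := by
    exact_mod_cast (Nat.cast_ne_zero (R := ℚ_[ℓ])).mpr x.den_nz
  have hcast : ((x : ℚ) : ℚ_[ℓ]) = (x.num : ℚ_[ℓ]) / (x.den : ℚ_[ℓ]) := by
    rw [Rat.cast_def]
  rw [hcast, norm_div]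
  have hdpos : 0 < ‖((x.den : ℕ) : ℚ_[ℓ])‖ := norm_pos_iff.mpr hd0
  rw [show ((x.num : ℚ_[ℓ])) = (((x.num : ℤ) : ℚ_[ℓ])) by push_cast; ring, hnn]
  rw [one_lt_div hdpos]
  exact hdd

end Aux

/-- **Proposition.**  For every prime `p`, the subring `ℤ[γ_p(ℚ)]` of `ℚ` generated by the
image of the Kochen operator is strictly contained in `ℤ_(p)`. -/
theorem closure_gammaImage_ssubset_Zloc (p : ℕ) (hp : p.Prime) :
    (Subring.closure (gammaImage p) : Set ℚ) ⊆ Zloc p ∧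
      (Subring.closure (gammaImage p) : Set ℚ) ≠ Zloc p := by
  haveI : Fact p.Prime := ⟨hp⟩
  obtain ⟨q, hq, hqp, hC⟩ :
      ∃ q : ℕ, q.Prime ∧ q ≠ p ∧ ∀ a : ZMod q, (a ^ p - a) ^ 2 ≠ 1 := by
    rcases eq_or_ne p 2 with rfl | hp2
    · exact ⟨17, by norm_num, by norm_num, by decide⟩
    · refine ⟨2, Nat.prime_two, fun h => hp2 h.symm, fun a => ?_⟩
      rw [aux_pow_zmod_two p hp.one_le a, sub_self]
      decide
  haveI : Fact q.Prime := ⟨hq⟩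
  -- the image lands in the unit ball at any suitable prime
  have himg : ∀ (ℓ : ℕ) [Fact ℓ.Prime],
      (∀ x : ℚ_[ℓ], ‖(p : ℚ_[ℓ])⁻¹ * ((x ^ p - x) / ((x ^ p - x) ^ 2 - 1))‖ ≤ 1) →
      gammaImage p ⊆ (unitBall ℓ : Set ℚ) := by
    intro ℓ _ hbound y hy
    obtain ⟨x, hx0, rfl⟩ := hy
    show ‖(((p : ℚ)⁻¹ * ((x ^ p - x) / ((x ^ p - x) ^ 2 - 1)) : ℚ) : ℚ_[ℓ])‖ ≤ 1
    have := hbound ((x : ℚ_[ℓ]))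
    push_cast
    exact this
  have hsubp : (Subring.closure (gammaImage p) : Set ℚ) ⊆ (unitBall p : Set ℚ) :=
    Subring.closure_le.mpr (himg p (aux_norm_gamma_le_p p))
  have hsubq : (Subring.closure (gammaImage p) : Set ℚ) ⊆ (unitBall q : Set ℚ) :=
    Subring.closure_le.mpr (himg q (aux_norm_gamma_le_ne p hp hqp hC))
  have hpq : ¬ p ∣ q := fun h => hqp ((Nat.prime_dvd_prime_iff_eq hp hq).mp h).symm
  constructor
  · intro x hx hden
    exact absurd (hsubp hx) (not_le.mpr (aux_one_lt_norm_of_dvd_den hden))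
  · intro heq
    -- 1/q is in Zloc p but not in the closure
    have hmem : (1 / (q : ℚ)) ∈ Zloc p := by
      intro hd
      have h1 := aux_one_lt_norm_of_dvd_den (ℓ := p) hd
      have h2 : ‖(((1 / (q : ℚ)) : ℚ) : ℚ_[p])‖ = 1 := by
        push_cast
        rw [norm_div, norm_one, aux_norm_natCast_eq_one hpq, div_one]
      rw [h2] at h1
      exact lt_irrefl 1 h1
    rw [← heq] at hmem
    have := hsubq hmem
    have hval : ‖(((1 / (q : ℚ)) : ℚ) : ℚ_[q])‖ = (q : ℝ) := by
      push_cast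
      rw [norm_div, norm_one, Padic.norm_p, one_div, inv_inv]
    have hq1 : 1 < (q : ℝ) := by exact_mod_cast hq.one_lt
    have : (q : ℝ) ≤ 1 := by
      rw [← hval]; exact this
    linarith
end

section
/- Let p and ℓ be distinct prime numbers with ℓ − 1 dividing p − 1. Then γ_p(ℚ) ⊆ ℓ·ℤ_(ℓ); that is, every element of the image of the Kochen operator γ_p on ℚ has positive ℓ-adic valuation. -/
lemma den_not_dvd_iff_val_nonneg {ℓ : ℕ} (hℓ : ℓ.Prime) (q : ℚ) :
    ¬ ℓ ∣ q.den ↔ 0 ≤ padicValRat ℓ q := by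
  haveI := Fact.mk hℓ
  constructor
  · intro h
    rw [padicValRat, padicValNat.eq_zero_of_not_dvd h]
    simp
  · intro h hdvd
    have h1 : 1 ≤ padicValNat ℓ q.den :=
      one_le_padicValNat_of_dvd q.pos.ne' hdvd
    have hnum : ¬ (ℓ : ℤ) ∣ q.num := by
      intro hd
      have h2 : ℓ ∣ q.num.natAbs := Int.natCast_dvd.mp hd
      have h3 : ℓ ∣ Nat.gcd q.num.natAbs q.den := Nat.dvd_gcd h2 hdvd
      have hg : Nat.gcd q.num.natAbs q.den = 1 := q.reduced
      rw [hg] at h3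
      exact hℓ.one_lt.ne' (Nat.dvd_one.mp h3)
    have h2 : padicValInt ℓ q.num = 0 := padicValInt.eq_zero_of_not_dvd hnum
    rw [padicValRat, h2] at h
    omega

lemma zmod_pow_sub_one {ℓ p : ℕ} (hℓ : ℓ.Prime) (hp : 1 ≤ p)
    (hdvd : (ℓ - 1) ∣ (p - 1)) {c : ZMod ℓ} (hc : c ≠ 0) : c ^ (p - 1) = 1 := by
  haveI := Fact.mk hℓ
  obtain ⟨k, hk⟩ := hdvd
  rw [hk, pow_mul, ZMod.pow_card_sub_one_eq_one hc, one_pow]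

lemma zmod_pow_self {ℓ p : ℕ} (hℓ : ℓ.Prime) (hp : 1 ≤ p)
    (hdvd : (ℓ - 1) ∣ (p - 1)) (c : ZMod ℓ) : c ^ p = c := by
  by_cases hc : c = 0
  · subst hc
    exact zero_pow (by omega)
  · have h := zmod_pow_sub_one hℓ hp hdvd hc
    have hpe : p = (p - 1) + 1 := by omega
    rw [hpe, pow_succ, h, one_mul]

/-- Key lemma: if `v_ℓ(x) ≥ 0` and `x^p - x ≠ 0`, then `v_ℓ(x^p - x) ≥ 1`. -/
lemma val_pow_sub_ge_one {p ℓ : ℕ} (hp : p.Prime) (hℓ : ℓ.Prime)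
    (hdvd : (ℓ - 1) ∣ (p - 1)) {x : ℚ} (hx : 0 ≤ padicValRat ℓ x)
    (ht : x ^ p - x ≠ 0) : 1 ≤ padicValRat ℓ (x ^ p - x) := by
  haveI := Fact.mk hℓ
  have hden : ¬ ℓ ∣ x.den := (den_not_dvd_iff_val_nonneg hℓ x).mpr hx
  set a : ℤ := x.num with ha
  set b : ℤ := (x.den : ℤ) with hb
  have hb0 : b ≠ 0 := by
    simp [hb, x.den_nz]
  have hbq : (b : ℚ) ≠ 0 := by exact_mod_cast hb0
  have hxab : x = (a : ℚ) / (b : ℚ) := by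
    rw [ha, hb]; push_cast; exact (Rat.num_div_den x).symm
  have key : x ^ p - x = ((a ^ p - a * b ^ (p - 1) : ℤ) : ℚ) / ((b ^ p : ℤ) : ℚ) := by
    obtain ⟨q, rfl⟩ : ∃ q, p = q + 1 := ⟨p - 1, (Nat.succ_pred_eq_of_pos hp.pos).symm⟩
    simp only [Nat.add_sub_cancel]
    rw [hxab]
    push_cast
    rw [div_pow, div_sub_div _ _ (pow_ne_zero _ hbq) hbq, div_eq_div_iff
      (mul_ne_zero (pow_ne_zero _ hbq) hbq) (pow_ne_zero _ hbq)]
    ring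
  -- numerator nonzero
  have hnum0 : (a ^ p - a * b ^ (p - 1) : ℤ) ≠ 0 := by
    intro h0
    apply ht
    rw [key, h0]
    simp
  -- ℓ divides the numerator
  have hdvdnum : (ℓ : ℤ) ∣ (a ^ p - a * b ^ (p - 1)) := by
    rw [← ZMod.intCast_zmod_eq_zero_iff_dvd]
    push_cast
    have hbz : ((b : ZMod ℓ)) ≠ 0 := by
      rw [hb]
      push_cast
      rw [Ne, ZMod.natCast_eq_zero_iff]
      exact hden
    rw [zmod_pow_self hℓ hp.one_lt.le hdvd (a : ZMod ℓ),
      zmod_pow_sub_one hℓ hp.one_lt.le hdvd hbz, mul_one, sub_self]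
  -- ℓ does not divide b^p
  have hbp : ¬ (ℓ : ℤ) ∣ b ^ p := by
    intro h
    have : (ℓ : ℤ) ∣ b := (Int.Prime.dvd_pow' (by exact_mod_cast hℓ) h)
    rw [hb] at this
    exact hden (Int.natCast_dvd_natCast.mp this)
  have hv1 : 1 ≤ padicValInt ℓ (a ^ p - a * b ^ (p - 1)) := by
    unfold padicValInt
    exact one_le_padicValNat_of_dvd (Int.natAbs_pos.mpr hnum0).ne'
      (Int.natCast_dvd.mp hdvdnum)
  have hv2 : padicValInt ℓ (b ^ p) = 0 := padicValInt.eq_zero_of_not_dvd hbp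
  rw [key, padicValRat.div (by exact_mod_cast hnum0) (by exact_mod_cast pow_ne_zero p hb0),
    padicValRat.of_int, padicValRat.of_int, hv2]
  omega

/-- **Lemma.**  Let `p` and `ℓ` be distinct primes with `ℓ - 1 ∣ p - 1`.  Then
`γ_p(ℚ) ⊆ ℓ·ℤ_(ℓ)`, i.e. every element of the image of the Kochen operator `γ_p` on `ℚ` has
positive `ℓ`-adic valuation. -/
theorem gammaImage_subset_mul_Zloc (p ℓ : ℕ) (hp : p.Prime) (hℓ : ℓ.Prime) (hne : p ≠ ℓ)
    (hdvd : (ℓ - 1) ∣ (p - 1)) :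
    ∀ y ∈ gammaImage p, y / ℓ ∈ Zloc ℓ := by
  haveI := Fact.mk hℓ
  rintro y ⟨x, hpole, rfl⟩
  set t : ℚ := x ^ p - x with htdef
  by_cases ht : t = 0
  · -- then y = 0
    rw [ht]
    simp only [zero_div, mul_zero, Zloc, Set.mem_setOf_eq, zero_div, Rat.den_zero]
    exact fun h => hℓ.one_lt.ne' (Nat.dvd_one.mp h)
  · have hℓq : (ℓ : ℚ) ≠ 0 := by exact_mod_cast hℓ.ne_zero
    have hpq : (p : ℚ) ≠ 0 := by exact_mod_cast hp.ne_zero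
    have hy : (p : ℚ)⁻¹ * (t / (t ^ 2 - 1)) ≠ 0 :=
      mul_ne_zero (inv_ne_zero hpq) (div_ne_zero ht hpole)
    -- valuation of p is 0
    have hvp : padicValRat ℓ (p : ℚ) = 0 := by
      have : ¬ (ℓ : ℤ) ∣ (p : ℤ) := by
        rw [Int.natCast_dvd_natCast]
        intro h
        exact hne ((Nat.prime_dvd_prime_iff_eq hℓ hp).mp h).symm
      have h0 : padicValInt ℓ (p : ℤ) = 0 := padicValInt.eq_zero_of_not_dvd this
      have h1 : padicValRat ℓ ((p : ℤ) : ℚ) = padicValInt ℓ (p : ℤ) := padicValRat.of_int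
      rw [h0] at h1
      simpa using h1
    have hvpinv : padicValRat ℓ ((p : ℚ)⁻¹) = 0 := by
      rw [padicValRat.inv, hvp, neg_zero]
    -- main claim: 1 ≤ v(y)
    have hmain : 1 ≤ padicValRat ℓ ((p : ℚ)⁻¹ * (t / (t ^ 2 - 1))) := by
      rw [padicValRat.mul (inv_ne_zero hpq) (div_ne_zero ht hpole), hvpinv, zero_add,
        padicValRat.div ht hpole]
      have hvm1 : padicValRat ℓ (-1 : ℚ) = 0 := by
        rw [padicValRat.neg, padicValRat.one]
      by_cases hx : 0 ≤ padicValRat ℓ x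
      · -- v(t) ≥ 1, v(t²-1) = 0
        have hvt : 1 ≤ padicValRat ℓ t := val_pow_sub_ge_one hp hℓ hdvd hx ht
        have hvt2 : padicValRat ℓ (t ^ 2) = 2 * padicValRat ℓ t := padicValRat.pow t
        have heq : t ^ 2 - 1 = -1 + t ^ 2 := by ring
        have hv : padicValRat ℓ (t ^ 2 - 1) = 0 := by
          rw [heq, padicValRat.add_eq_of_lt (by rw [← heq]; exact hpole) (by norm_num)
            (pow_ne_zero 2 ht) (by rw [hvm1, hvt2]; omega), hvm1]
        omega
      · -- v(x) < 0
        push_neg at hx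
        have hx0 : x ≠ 0 := by
          intro h0
          rw [h0] at hx
          simp [padicValRat] at hx
        have hvxp : padicValRat ℓ (x ^ p) = p * padicValRat ℓ x := padicValRat.pow x
        have hp2 : 2 ≤ p := hp.two_le
        have hlt : padicValRat ℓ (x ^ p) < padicValRat ℓ (-x) := by
          rw [hvxp, padicValRat.neg]
          nlinarith [hx]
        have hteq : t = x ^ p + (-x) := by rw [htdef]; ring
        have hvt : padicValRat ℓ t = p * padicValRat ℓ x := by
          rw [hteq, padicValRat.add_eq_of_lt (by rw [← hteq]; exact ht)
            (pow_ne_zero p hx0) (neg_ne_zero.mpr hx0) hlt, hvxp]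
        have hvt2 : padicValRat ℓ (t ^ 2) = 2 * padicValRat ℓ t := padicValRat.pow t
        have heq : t ^ 2 - 1 = t ^ 2 + (-1) := by ring
        have hv : padicValRat ℓ (t ^ 2 - 1) = 2 * padicValRat ℓ t := by
          rw [heq, padicValRat.add_eq_of_lt (by rw [← heq]; exact hpole)
            (pow_ne_zero 2 ht) (by norm_num)
            (by rw [hvm1, hvt2, hvt]; nlinarith [hx]), hvt2]
        rw [hv, hvt]
        nlinarith [hx]
    -- conclude
    show ¬ ℓ ∣ _
    rw [den_not_dvd_iff_val_nonneg hℓ]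
    have hd : padicValRat ℓ (((p : ℚ)⁻¹ * (t / (t ^ 2 - 1))) / (ℓ : ℚ))
        = padicValRat ℓ ((p : ℚ)⁻¹ * (t / (t ^ 2 - 1))) - padicValRat ℓ (ℓ : ℚ) :=
      padicValRat.div hy hℓq
    have hvl : padicValRat ℓ (ℓ : ℚ) = 1 := padicValRat.self hℓ.one_lt
    rw [hd, hvl]
    omega
end

section
/- For every finite set 𝒫 of polynomials with rational coefficients (in finitely many variables X_1, …, X_n), there exist prime numbers p and ℓ with ℓ ≠ p such that ⋃_{g∈𝒫} R_{p,g,p}(ℚ) ⊆ ℤ_(ℓ). -/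
/-- The set `R_{p,g,p}(ℚ) = { a/(1 + p b) | a, b ∈ g(γ_p(ℚ),…,γ_p(ℚ)), 1 + p b ≠ 0 }` for a
polynomial `g ∈ ℚ[X_1,…,X_n]`. -/
def RgpSet (p : ℕ) {n : ℕ} (g : MvPolynomial (Fin n) ℚ) : Set ℚ :=
  {y | ∃ a b : ℚ,
    (∃ c : Fin n → ℚ, (∀ i, c i ∈ gammaImage p) ∧ MvPolynomial.eval c g = a) ∧
    (∃ c : Fin n → ℚ, (∀ i, c i ∈ gammaImage p) ∧ MvPolynomial.eval c g = b) ∧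
    1 + p * b ≠ 0 ∧ y = a / (1 + p * b)}

section aux
variable {ℓ : ℕ} [Fact ℓ.Prime]


lemma toZMod_eq_zero_iff' (z : ℤ_[ℓ]) : PadicInt.toZMod z = 0 ↔ ‖z‖ < 1 := by
  rw [← RingHom.mem_ker, PadicInt.ker_toZMod, PadicInt.maximalIdeal_eq_span_p,
    Ideal.mem_span_singleton, ← PadicInt.norm_lt_one_iff_dvd]

lemma mem_Zloc_of_norm_le_one {x : ℚ} (h : ‖(x : ℚ_[ℓ])‖ ≤ 1) : x ∈ Zloc ℓ := by
  intro hdvd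
  have h1 : ‖((x.den : ℤ) : ℤ_[ℓ])‖ < 1 :=
    (PadicInt.norm_int_lt_one_iff_dvd _).mpr (Int.natCast_dvd_natCast.mpr hdvd)
  have h2 := PadicInt.isUnit_iff.mp (PadicInt.isUnit_den x h)
  rw [show ((x.den : ℤ) : ℤ_[ℓ]) = ((x.den : ℕ) : ℤ_[ℓ]) by push_cast; ring] at h1
  rw [h2] at h1
  exact lt_irrefl _ h1

lemma norm_natCast_eq_one_of_not_dvd {p : ℕ} (hlp : ¬ ℓ ∣ p) : ‖((p : ℕ) : ℚ_[ℓ])‖ = 1 := by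
  have hle : ‖((p : ℤ) : ℚ_[ℓ])‖ ≤ 1 := Padic.norm_int_le_one _
  have hnlt : ¬ ‖((p : ℤ) : ℚ_[ℓ])‖ < 1 := fun hlt =>
    hlp (Int.natCast_dvd_natCast.mp (Padic.norm_intCast_lt_one_iff.mp hlt))
  have : ‖((p : ℤ) : ℚ_[ℓ])‖ = 1 := le_antisymm hle (not_lt.mp hnlt)
  simpa using this

lemma gamma_norm_lt {p : ℕ} (hp : p.Prime) (hlp : ¬ ℓ ∣ p) (hfe : ∀ a : ZMod ℓ, a ^ p = a)
    {y : ℚ} (hy : y ∈ gammaImage p) : ‖(y : ℚ_[ℓ])‖ < 1 := by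
  obtain ⟨x, hd, rfl⟩ := hy
  have hcast : (((p : ℚ)⁻¹ * ((x ^ p - x) / ((x ^ p - x) ^ 2 - 1)) : ℚ) : ℚ_[ℓ])
      = ((p : ℕ) : ℚ_[ℓ])⁻¹ * ((((x : ℚ_[ℓ]) ^ p - x) / (((x : ℚ_[ℓ]) ^ p - x) ^ 2 - 1))) := by
    push_cast
    ring
  rw [hcast]
  set X : ℚ_[ℓ] := (x : ℚ_[ℓ]) with hX
  set T : ℚ_[ℓ] := X ^ p - X with hT
  have hpnorm : ‖((p : ℕ) : ℚ_[ℓ])⁻¹‖ = 1 := by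
    rw [norm_inv, norm_natCast_eq_one_of_not_dvd hlp, inv_one]
  rw [norm_mul, hpnorm, one_mul, norm_div]
  by_cases h : ‖X‖ ≤ 1
  · -- integral case
    set Z : ℤ_[ℓ] := ⟨X, h⟩ with hZ
    have hZT : ((Z ^ p - Z : ℤ_[ℓ]) : ℚ_[ℓ]) = T := by
      push_cast
      rfl
    have hTnorm : ‖T‖ < 1 := by
      rw [← hZT, PadicInt.padic_norm_e_of_padicInt, ← toZMod_eq_zero_iff']
      rw [map_sub, map_pow, hfe, sub_self]
    have hT2 : ‖T ^ 2‖ < 1 := by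
      rw [norm_pow]
      exact pow_lt_one₀ (norm_nonneg _) hTnorm two_ne_zero
    have hDnorm : ‖T ^ 2 - 1‖ = 1 := by
      have hne : ‖T ^ 2‖ ≠ ‖(-1 : ℚ_[ℓ])‖ := by
        rw [norm_neg, norm_one]; exact ne_of_lt hT2
      rw [show T ^ 2 - 1 = T ^ 2 + (-1) by ring, Padic.add_eq_max_of_ne hne,
        norm_neg, norm_one]
      exact max_eq_right (le_of_lt hT2)
    rw [hDnorm, div_one]
    exact hTnorm
  · push_neg at h
    have hXp : ‖X‖ < ‖X‖ ^ p := lt_self_pow₀ h hp.one_lt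
    have hTnorm : ‖T‖ = ‖X‖ ^ p := by
      have hne : ‖X ^ p‖ ≠ ‖(-X)‖ := by
        rw [norm_pow, norm_neg]; exact ne_of_gt hXp
      rw [show T = X ^ p + (-X) by ring, Padic.add_eq_max_of_ne hne, norm_pow, norm_neg]
      exact max_eq_left (le_of_lt hXp)
    have hT1 : 1 < ‖T‖ := by
      rw [hTnorm]
      exact one_lt_pow₀ h hp.pos.ne'
    have hT2 : 1 < ‖T ^ 2‖ := by
      rw [norm_pow]; exact one_lt_pow₀ hT1 two_ne_zero
    have hDnorm : ‖T ^ 2 - 1‖ = ‖T‖ ^ 2 := by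
      have hne : ‖T ^ 2‖ ≠ ‖(-1 : ℚ_[ℓ])‖ := by
        rw [norm_neg, norm_one]; exact ne_of_gt hT2
      rw [show T ^ 2 - 1 = T ^ 2 + (-1) by ring, Padic.add_eq_max_of_ne hne,
        norm_neg, norm_one, norm_pow]
      exact max_eq_left (le_of_lt (by rwa [norm_pow] at hT2))
    rw [hDnorm, pow_two, div_mul_eq_div_div, div_self (by positivity), one_div]
    rw [inv_lt_one_iff₀]
    right; exact hT1



lemma padic_sum_norm_le {α : Type*} (s : Finset α) (f : α → ℚ_[ℓ]) {b : ℝ} (hb : 0 ≤ b)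
    (h : ∀ i ∈ s, ‖f i‖ ≤ b) : ‖∑ i ∈ s, f i‖ ≤ b := by
  classical
  induction s using Finset.induction_on with
  | empty => simpa using hb
  | insert _ _ hni ih =>
    rw [Finset.sum_insert hni]
    exact le_trans (Padic.nonarchimedean _ _)
      (max_le (h _ (Finset.mem_insert_self _ _)) (ih fun i hi => h i (Finset.mem_insert_of_mem hi)))

lemma padic_sum_norm_lt {α : Type*} (s : Finset α) (f : α → ℚ_[ℓ]) {b : ℝ} (hb : 0 < b)
    (h : ∀ i ∈ s, ‖f i‖ < b) : ‖∑ i ∈ s, f i‖ < b := by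
  classical
  induction s using Finset.induction_on with
  | empty => simpa using hb
  | insert _ _ hni ih =>
    rw [Finset.sum_insert hni]
    exact lt_of_le_of_lt (Padic.nonarchimedean _ _)
      (max_lt (h _ (Finset.mem_insert_self _ _)) (ih fun i hi => h i (Finset.mem_insert_of_mem hi)))

lemma eval_cast_eq_sum {n : ℕ} (g : MvPolynomial (Fin n) ℚ) (c : Fin n → ℚ) :
    ((MvPolynomial.eval c g : ℚ) : ℚ_[ℓ]) =
      ∑ d ∈ g.support, ((g.coeff d : ℚ) : ℚ_[ℓ]) * ∏ i, ((c i : ℚ) : ℚ_[ℓ]) ^ d i := by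
  have h1 := MvPolynomial.eval₂_comp_left (Rat.castHom ℚ_[ℓ]) (RingHom.id ℚ) c g
  rw [MvPolynomial.eval₂_id] at h1
  rw [show ((MvPolynomial.eval c g : ℚ) : ℚ_[ℓ]) = (Rat.castHom ℚ_[ℓ]) (MvPolynomial.eval c g) from rfl,
    h1, MvPolynomial.eval₂_eq']
  rfl

lemma eval_norm_le {n : ℕ} (g : MvPolynomial (Fin n) ℚ) (c : Fin n → ℚ)
    (hcoef : ∀ d, ¬ ℓ ∣ (g.coeff d).den)
    (hc : ∀ i, ‖((c i : ℚ) : ℚ_[ℓ])‖ < 1) :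
    ‖((MvPolynomial.eval c g : ℚ) : ℚ_[ℓ])‖ ≤ 1 := by
  rw [eval_cast_eq_sum]
  apply padic_sum_norm_le _ _ zero_le_one
  intro d _
  rw [norm_mul]
  have h1 : ‖((g.coeff d : ℚ) : ℚ_[ℓ])‖ ≤ 1 := Padic.norm_rat_le_one (hcoef d)
  have h2 : ‖∏ i, ((c i : ℚ) : ℚ_[ℓ]) ^ d i‖ ≤ 1 := by
    rw [norm_prod]
    apply Finset.prod_le_one (fun i _ => norm_nonneg _)
    intro i _
    rw [norm_pow]
    exact pow_le_one₀ (norm_nonneg _) (le_of_lt (hc i))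
  calc ‖((g.coeff d : ℚ) : ℚ_[ℓ])‖ * ‖∏ i, ((c i : ℚ) : ℚ_[ℓ]) ^ d i‖
      ≤ 1 * 1 := mul_le_mul h1 h2 (norm_nonneg _) zero_le_one
    _ = 1 := one_mul 1

lemma eval_sub_const_norm_lt {n : ℕ} (g : MvPolynomial (Fin n) ℚ) (c : Fin n → ℚ)
    (hcoef : ∀ d, ¬ ℓ ∣ (g.coeff d).den)
    (hc : ∀ i, ‖((c i : ℚ) : ℚ_[ℓ])‖ < 1) :
    ‖((MvPolynomial.eval c g : ℚ) : ℚ_[ℓ]) - ((g.coeff 0 : ℚ) : ℚ_[ℓ])‖ < 1 := by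
  classical
  have hsplit : ((MvPolynomial.eval c g : ℚ) : ℚ_[ℓ]) - ((g.coeff 0 : ℚ) : ℚ_[ℓ]) =
      ∑ d ∈ g.support.erase 0, ((g.coeff d : ℚ) : ℚ_[ℓ]) * ∏ i, ((c i : ℚ) : ℚ_[ℓ]) ^ d i := by
    rw [eval_cast_eq_sum]
    by_cases h0 : (0 : Fin n →₀ ℕ) ∈ g.support
    · rw [← Finset.add_sum_erase _ _ h0]
      simp
    · rw [Finset.erase_eq_of_notMem h0, MvPolynomial.notMem_support_iff.mp h0]
      simp
  rw [hsplit]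
  apply padic_sum_norm_lt _ _ zero_lt_one
  intro d hd
  obtain ⟨j, hj⟩ : ∃ j, d j ≠ 0 := by
    by_contra hcon
    push_neg at hcon
    exact (Finset.mem_erase.mp hd).1 (Finsupp.ext hcon)
  rw [norm_mul]
  have h1 : ‖((g.coeff d : ℚ) : ℚ_[ℓ])‖ ≤ 1 := Padic.norm_rat_le_one (hcoef d)
  have h2 : ‖∏ i, ((c i : ℚ) : ℚ_[ℓ]) ^ d i‖ < 1 := by
    rw [norm_prod]
    have hsplit2 : ∏ i, ‖((c i : ℚ) : ℚ_[ℓ]) ^ d i‖ =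
        ‖((c j : ℚ) : ℚ_[ℓ]) ^ d j‖ * ∏ i ∈ Finset.univ.erase j, ‖((c i : ℚ) : ℚ_[ℓ]) ^ d i‖ :=
      (Finset.mul_prod_erase _ _ (Finset.mem_univ j)).symm
    rw [hsplit2]
    have hrest : ∏ i ∈ Finset.univ.erase j, ‖((c i : ℚ) : ℚ_[ℓ]) ^ d i‖ ≤ 1 := by
      apply Finset.prod_le_one (fun i _ => norm_nonneg _)
      intro i _
      rw [norm_pow]
      exact pow_le_one₀ (norm_nonneg _) (le_of_lt (hc i))
    have hj1 : ‖((c j : ℚ) : ℚ_[ℓ]) ^ d j‖ < 1 := by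
      rw [norm_pow]
      exact pow_lt_one₀ (norm_nonneg _) (hc j) hj
    calc ‖((c j : ℚ) : ℚ_[ℓ]) ^ d j‖ * ∏ i ∈ Finset.univ.erase j, ‖((c i : ℚ) : ℚ_[ℓ]) ^ d i‖
        ≤ ‖((c j : ℚ) : ℚ_[ℓ]) ^ d j‖ * 1 :=
          mul_le_mul_of_nonneg_left hrest (norm_nonneg _)
      _ < 1 := by rwa [mul_one]
  calc ‖((g.coeff d : ℚ) : ℚ_[ℓ])‖ * ‖∏ i, ((c i : ℚ) : ℚ_[ℓ]) ^ d i‖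
      ≤ 1 * ‖∏ i, ((c i : ℚ) : ℚ_[ℓ]) ^ d i‖ :=
        mul_le_mul_of_nonneg_right h1 (norm_nonneg _)
    _ < 1 := by rwa [one_mul]

end aux

/-- **Proposition.**  For every finite set `Ps` of polynomials with rational coefficients in
variables `X_1, …, X_n`, there exist primes `p ≠ ℓ` with
`⋃_{g ∈ Ps} R_{p,g,p}(ℚ) ⊆ ℤ_(ℓ)`. -/
theorem exists_primes_RgpSet_subset_Zloc (n : ℕ) (Ps : Finset (MvPolynomial (Fin n) ℚ)) :
    ∃ p ℓ : ℕ, p.Prime ∧ ℓ.Prime ∧ ℓ ≠ p ∧ ∀ g ∈ Ps, RgpSet p g ⊆ Zloc ℓ := by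

  classical
  -- Choose a large prime ℓ
  set B : ℕ := Ps.sup fun g => g.support.sup fun d => (g.coeff d).den with hB
  obtain ⟨ℓ, hℓge, hℓp⟩ := Nat.exists_infinite_primes (max B (Ps.card + 1) + 1)
  haveI : Fact ℓ.Prime := ⟨hℓp⟩
  have hBℓ : B < ℓ := by have := le_max_left B (Ps.card + 1); omega
  have hcardℓ : Ps.card + 1 < ℓ := by have := le_max_right B (Ps.card + 1); omega
  have hden : ∀ g ∈ Ps, ∀ d, ¬ ℓ ∣ (g.coeff d).den := by
    intro g hg d hdvd
    have hlt : (g.coeff d).den < ℓ := by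
      by_cases hd : d ∈ g.support
      · have h1 : (g.coeff d).den ≤ g.support.sup fun d => (g.coeff d).den :=
          Finset.le_sup (f := fun d => (g.coeff d).den) hd
        have h2 : (g.support.sup fun d => (g.coeff d).den) ≤ B :=
          Finset.le_sup (f := fun g : MvPolynomial (Fin n) ℚ =>
            g.support.sup fun d => (g.coeff d).den) hg
        omega
      · rw [MvPolynomial.notMem_support_iff.mp hd]
        simpa using hℓp.one_lt
    have hpos : 0 < (g.coeff d).den := (g.coeff d).pos
    exact absurd (Nat.le_of_dvd hpos hdvd) (not_le.mpr hlt)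
  -- Avoid bad residues mod ℓ
  let r : MvPolynomial (Fin n) ℚ → ZMod ℓ := fun g =>
    if h : ‖((g.coeff 0 : ℚ) : ℚ_[ℓ])‖ ≤ 1 then PadicInt.toZMod (⟨_, h⟩ : ℤ_[ℓ]) else 0
  set F : Finset (ZMod ℓ) := insert 0 (Ps.image fun g => -(r g)⁻¹) with hF
  have hFcard : F.card < Fintype.card (ZMod ℓ) := by
    calc F.card ≤ (Ps.image fun g => -(r g)⁻¹).card + 1 := Finset.card_insert_le _ _
      _ ≤ Ps.card + 1 := by
          have := Finset.card_image_le (f := fun g => -(r g)⁻¹) (s := Ps); omega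
      _ < ℓ := hcardℓ
      _ = Fintype.card (ZMod ℓ) := (ZMod.card ℓ).symm
  have hFne := (Finset.card_lt_iff_ne_univ F).mp hFcard
  obtain ⟨u, hu⟩ : ∃ u, u ∉ F := by
    by_contra h
    push_neg at h
    exact hFne (Finset.eq_univ_iff_forall.mpr h)
  have hu0 : u ≠ 0 := fun h => hu (h ▸ Finset.mem_insert_self _ _)
  have hugood : ∀ g ∈ Ps, (1 : ZMod ℓ) + u * r g ≠ 0 := by
    intro g hg hzero
    have hrg : r g ≠ 0 := by
      intro h
      rw [h, mul_zero, add_zero] at hzero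
      exact one_ne_zero hzero
    have h1 : u * r g = -1 := eq_neg_of_add_eq_zero_right hzero
    have h2 : (-(r g)⁻¹) * r g = -1 := by
      rw [neg_mul, inv_mul_cancel₀ hrg]
    have h3 : u = -(r g)⁻¹ := mul_right_cancel₀ hrg (h1.trans h2.symm)
    exact hu (Finset.mem_insert_of_mem (h3 ▸ Finset.mem_image_of_mem _ hg))
  -- Dirichlet: find p prime with p ≡ u mod ℓ, p ≡ 1 mod ℓ - 1
  have hcop : Nat.Coprime ℓ (ℓ - 1) := by
    rw [Nat.Prime.coprime_iff_not_dvd hℓp]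
    intro h
    have h2 := hℓp.two_le
    have := Nat.le_of_dvd (by omega) h
    omega
  haveI : NeZero (ℓ * (ℓ - 1)) :=
    ⟨Nat.mul_ne_zero (by have := hℓp.two_le; omega) (by have := hℓp.two_le; omega)⟩
  set e := ZMod.chineseRemainder hcop with he
  have haunit : IsUnit (e.symm (u, (1 : ZMod (ℓ - 1)))) := by
    apply IsUnit.map
    refine IsUnit.of_mul_eq_one (u⁻¹, 1) ?_
    rw [Prod.mk_mul_mk, mul_inv_cancel₀ hu0, mul_one]
    rfl
  obtain ⟨p, hpgt, hppr, hpmod⟩ := Nat.forall_exists_prime_gt_and_eq_mod haunit ℓ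
  have hmods : ((p : ZMod ℓ) = u) ∧ ((p : ZMod (ℓ - 1)) = 1) := by
    have h1 := congrArg e hpmod
    rw [RingEquiv.apply_symm_apply, map_natCast] at h1
    exact ⟨by simpa using congrArg Prod.fst h1, by simpa using congrArg Prod.snd h1⟩
  have hlp : ¬ ℓ ∣ p := by
    intro h
    rcases (Nat.Prime.eq_one_or_self_of_dvd hppr ℓ h) with h1 | h1
    · exact hℓp.one_lt.ne' h1
    · omega
  have hfermat : ∀ a : ZMod ℓ, a ^ p = a := by
    have hdvd : (ℓ - 1) ∣ (p - 1) := by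
      have h1 : ((p : ℕ) : ZMod (ℓ - 1)) = ((1 : ℕ) : ZMod (ℓ - 1)) := by
        simpa using hmods.2
      have h2 := (ZMod.natCast_eq_natCast_iff _ _ _).mp h1
      exact (Nat.modEq_iff_dvd' hppr.one_lt.le).mp h2.symm
    obtain ⟨k, hk⟩ := hdvd
    have hpk : p = 1 + (ℓ - 1) * k := by have := hppr.pos; omega
    intro a
    by_cases ha : a = 0
    · rw [ha]
      exact zero_pow hppr.pos.ne'
    · rw [hpk, pow_add, pow_one, pow_mul, ZMod.pow_card_sub_one_eq_one ha, one_pow, mul_one]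
  refine ⟨p, ℓ, hppr, hℓp, by omega, ?_⟩
  intro g hg y hy
  obtain ⟨a, b, ⟨c, hcmem, hca⟩, ⟨c', hcmem', hcb⟩, hne1, rfl⟩ := hy
  apply mem_Zloc_of_norm_le_one
  have hcoefs : ∀ d, ¬ ℓ ∣ (g.coeff d).den := hden g hg
  have hcn : ∀ i, ‖((c i : ℚ) : ℚ_[ℓ])‖ < 1 := fun i => gamma_norm_lt hppr hlp hfermat (hcmem i)
  have hcn' : ∀ i, ‖((c' i : ℚ) : ℚ_[ℓ])‖ < 1 :=
    fun i => gamma_norm_lt hppr hlp hfermat (hcmem' i)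
  have hA : ‖((a : ℚ) : ℚ_[ℓ])‖ ≤ 1 := by rw [← hca]; exact eval_norm_le g c hcoefs hcn
  have hB2 : ‖((b : ℚ) : ℚ_[ℓ]) - ((g.coeff 0 : ℚ) : ℚ_[ℓ])‖ < 1 := by
    rw [← hcb]; exact eval_sub_const_norm_lt g c' hcoefs hcn'
  have hq0 : ‖((g.coeff 0 : ℚ) : ℚ_[ℓ])‖ ≤ 1 := Padic.norm_rat_le_one (hcoefs 0)
  let Q0 : ℤ_[ℓ] := ⟨((g.coeff 0 : ℚ) : ℚ_[ℓ]), hq0⟩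
  have hznorm : ‖((1 + (p : ℤ_[ℓ]) * Q0 : ℤ_[ℓ]) : ℚ_[ℓ])‖ = 1 := by
    have hle := PadicInt.norm_le_one (1 + (p : ℤ_[ℓ]) * Q0)
    have hrg : r g = PadicInt.toZMod Q0 := dif_pos hq0
    have hnz : PadicInt.toZMod (1 + (p : ℤ_[ℓ]) * Q0) ≠ 0 := by
      rw [map_add, map_mul, map_one, map_natCast, hmods.1, ← hrg]
      exact hugood g hg
    have hnlt : ¬ ‖(1 + (p : ℤ_[ℓ]) * Q0 : ℤ_[ℓ])‖ < 1 := fun hlt =>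
      hnz ((toZMod_eq_zero_iff' _).mpr hlt)
    rw [PadicInt.padic_norm_e_of_padicInt]
    exact le_antisymm hle (not_lt.mp hnlt)
  have hPnorm : ‖((p : ℕ) : ℚ_[ℓ])‖ = 1 := norm_natCast_eq_one_of_not_dvd hlp
  have hcoe : ((1 + (p : ℤ_[ℓ]) * Q0 : ℤ_[ℓ]) : ℚ_[ℓ])
      = 1 + ((p : ℕ) : ℚ_[ℓ]) * ((g.coeff 0 : ℚ) : ℚ_[ℓ]) := by
    push_cast
    rfl
  have hone : ‖(1 : ℚ_[ℓ]) + ((p : ℕ) : ℚ_[ℓ]) * ((g.coeff 0 : ℚ) : ℚ_[ℓ])‖ = 1 := by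
    rw [← hcoe]; exact hznorm
  have hsmall : ‖((p : ℕ) : ℚ_[ℓ]) * (((b : ℚ) : ℚ_[ℓ]) - ((g.coeff 0 : ℚ) : ℚ_[ℓ]))‖ < 1 := by
    rw [norm_mul, hPnorm, one_mul]; exact hB2
  have hDen : ‖(1 : ℚ_[ℓ]) + ((p : ℕ) : ℚ_[ℓ]) * ((b : ℚ) : ℚ_[ℓ])‖ = 1 := by
    have hsp : (1 : ℚ_[ℓ]) + ((p : ℕ) : ℚ_[ℓ]) * ((b : ℚ) : ℚ_[ℓ])
        = ((1 : ℚ_[ℓ]) + ((p : ℕ) : ℚ_[ℓ]) * ((g.coeff 0 : ℚ) : ℚ_[ℓ]))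
          + ((p : ℕ) : ℚ_[ℓ]) * (((b : ℚ) : ℚ_[ℓ]) - ((g.coeff 0 : ℚ) : ℚ_[ℓ])) := by ring
    have hne : ‖(1 : ℚ_[ℓ]) + ((p : ℕ) : ℚ_[ℓ]) * ((g.coeff 0 : ℚ) : ℚ_[ℓ])‖
        ≠ ‖((p : ℕ) : ℚ_[ℓ]) * (((b : ℚ) : ℚ_[ℓ]) - ((g.coeff 0 : ℚ) : ℚ_[ℓ]))‖ := by
      rw [hone]; exact (ne_of_lt hsmall).symm
    rw [hsp, Padic.add_eq_max_of_ne hne, hone]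
    exact max_eq_left (le_of_lt hsmall)
  have hcasty : (((a / (1 + (p : ℕ) * b)) : ℚ) : ℚ_[ℓ])
      = ((a : ℚ) : ℚ_[ℓ]) / ((1 : ℚ_[ℓ]) + ((p : ℕ) : ℚ_[ℓ]) * ((b : ℚ) : ℚ_[ℓ])) := by
    push_cast
    ring
  rw [hcasty, norm_div, hDen, div_one]
  exact hA
end

section
/- Let K be a number field, 𝔭 a finite place of K with uniformizer t_𝔭 and residue field of size q, and τ = (e,f) ∈ ℕ². Let F be a field extension of K, let v be a valuation on F lying above 𝔭 (for instance v = v_𝔓 for a prime 𝔓 ∈ S*_𝔭(F)), written additively, and let x ∈ F not be a pole of the Kochen operator γ^τ_{𝔭,t_𝔭}. Then: (1) if v(x) < 0, then v(γ^τ_{𝔭,t_𝔭}(x)) = −e·q^f·v(x) − v(t_𝔭); (2) if v(x) > 0, then v(γ^τ_{𝔭,t_𝔭}(x)) = e·v(x) − v(t_𝔭); (3) if v(x) = 0 and v(x^{q^f}−x) > 0, then v(γ^τ_{𝔭,t_𝔭}(x)) = e·v(x^{q^f}−x) − v(t_𝔭); (4) if v(x) = 0 and v(x^{q^f}−x) =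 0, then v(γ^τ_{𝔭,t_𝔭}(x)) = −e·v((x^{q^f}−x)^2−1) − v(t_𝔭). -/
open IsDedekindDomain NumberField
open scoped Multiplicative

/-- The residue characteristic of a finite place `𝔭` of a number field `K`. -/
noncomputable def resChar (K : Type*) [Field K] [NumberField K] (𝔭 : HeightOneSpectrum (𝓞 K)) : ℕ :=
  ringChar (𝓞 K ⧸ 𝔭.asIdeal)

/-- The cardinality `q` of the residue field of a finite place `𝔭` of a number field `K`. -/
noncomputable def resCard (K : Type*) [Field K] [NumberField K]
    (𝔭 : HeightOneSpectrum (𝓞 K)) : ℕ :=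
  Nat.card (𝓞 K ⧸ 𝔭.asIdeal)

/-- `t : K` is a uniformizer of the finite place `𝔭`, i.e. `v_𝔭(t) = 1` (written additively). -/
def IsUniformizerAt (K : Type*) [Field K] [NumberField K] (𝔭 : HeightOneSpectrum (𝓞 K))
    (t : K) : Prop :=
  𝔭.valuation K t = Multiplicative.ofAdd (-1 : ℤ)

/-- `O` is the valuation ring of a `p`-valuation on the extension `F` of `K` lying above the
finite place `𝔭` of `K` (where `p` is the residue characteristic of `𝔭`):  it has finite
residue field of characteristic `p`, the interval `(0, v(p)]` in the value group is finite, and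
the restriction of the corresponding valuation to `K` is equivalent to `v_𝔭`.
This represents a prime `𝔓 ∈ S*_𝔭(F)`. -/
def IsPrimeAbove (K : Type*) [Field K] [NumberField K] (𝔭 : HeightOneSpectrum (𝓞 K))
    (F : Type*) [Field F] [Algebra K F] (O : ValuationSubring F) : Prop :=
  Finite (IsLocalRing.ResidueField O) ∧
  CharP (IsLocalRing.ResidueField O) (resChar K 𝔭) ∧
  {γ : O.ValueGroup | O.valuation ((resChar K 𝔭 : F)) ≤ γ ∧ γ < 1}.Finite ∧
  (∀ a : K, algebraMap K F a ∈ O ↔ 𝔭.valuation K a ≤ 1)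

/-- The additive value `v_𝔓(t)` of `t` under the canonical (normalized) representative `v_𝔓`:
since `ℤ` is the smallest nontrivial convex subgroup of the value group, `v_𝔓(t) = n > 0` iff the
interval `(0, v_𝔓(t)]` in the value group has exactly `n` elements.  Multiplicatively this
interval is `{γ | v(t) ≤ γ < 1}`.  Applied to (the image in `F` of) a uniformizer `t` of `𝔭`,
this is the relative initial ramification `e(𝔓|𝔭)`. -/
noncomputable def ramIdx (F : Type*) [Field F] (O : ValuationSubring F) (t : F) : ℕ :=
  {γ : O.ValueGroup | O.valuation t ≤ γ ∧ γ < 1}.ncard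

/-- The relative residue degree `f(𝔓|𝔭)` divides `f`:  the residue field of `O`, a finite
extension of the residue field of `𝔭`, has cardinality `q ^ d` for some `d ∣ f`. -/
def ResDegDvd (K : Type*) [Field K] [NumberField K] (𝔭 : HeightOneSpectrum (𝓞 K))
    (F : Type*) [Field F] (O : ValuationSubring F) (f : ℕ) : Prop :=
  ∃ d : ℕ, d ∣ f ∧ Nat.card (IsLocalRing.ResidueField O) = resCard K 𝔭 ^ d

/-- The prime (represented by) `O` is of relative type at most `τ = (e,f)` over `𝔭`, where
`t` is a fixed uniformizer of `𝔭`: `e(𝔓|𝔭) ≤ e` and `f(𝔓|𝔭) ∣ f`. -/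
def RelTypeLE (K : Type*) [Field K] [NumberField K] (𝔭 : HeightOneSpectrum (𝓞 K))
    (F : Type*) [Field F] [Algebra K F] (O : ValuationSubring F) (t : K) (e f : ℕ) : Prop :=
  ramIdx F O (algebraMap K F t) ≤ e ∧ ResDegDvd K 𝔭 F O f

/-- `x` is not a pole of the Kochen operator `γ^τ_{𝔭,t}`. -/
def KochenDefinedAt (F : Type*) [Field F] (q f : ℕ) (x : F) : Prop :=
  (x ^ q ^ f - x) ^ 2 - 1 ≠ 0

/-- The Kochen operator `γ^τ_{𝔭,t}(x) = t⁻¹ ((x^{q^f} - x)/((x^{q^f} - x)² - 1))^e`. -/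
noncomputable def kochen (F : Type*) [Field F] (q e f : ℕ) (t x : F) : F :=
  t⁻¹ * ((x ^ q ^ f - x) / ((x ^ q ^ f - x) ^ 2 - 1)) ^ e



section Aux

lemma kochen_aux_cancel {G : Type*} [CommGroupWithZero G] (c t : G) (hc : c ≠ 0) (ht : t ≠ 0) :
    t⁻¹ * c⁻¹ * (c * t) = 1 := by
  rw [mul_assoc, ← mul_assoc c⁻¹ c t, inv_mul_cancel₀ hc, one_mul, inv_mul_cancel₀ ht]

lemma resCard_two_le (K : Type*) [Field K] [NumberField K] (𝔭 : HeightOneSpectrum (𝓞 K)) :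
    2 ≤ resCard K 𝔭 := by
  letI := @Fintype.ofFinite _ (Ideal.finiteQuotientOfFreeOfNeBot 𝔭.asIdeal 𝔭.ne_bot)
  have : Nontrivial (𝓞 K ⧸ 𝔭.asIdeal) := Ideal.Quotient.nontrivial_iff.mpr 𝔭.isPrime.ne_top
  haveI : Finite (𝓞 K ⧸ 𝔭.asIdeal) := Finite.of_fintype _
  have h : 1 < Nat.card (𝓞 K ⧸ 𝔭.asIdeal) := Finite.one_lt_card
  rw [resCard]
  omega

end Aux

/-- **Lemma (values of the Kochen operator).**
Let `F/K` be a field extension, `v` a (Krull) valuation on `F` lying above the finite place `𝔭`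
of `K` (for instance `v = v_𝔓` for a prime `𝔓 ∈ S*_𝔭(F)`), and let `x ∈ F` not be a pole of the
Kochen operator `γ = γ^τ_{𝔭,t}`.  Writing the statements of the paper (which are additive, with
value group written additively) multiplicatively (so `v(x) < 0` becomes `1 < v x`, sums become
products, and `v(a) = -b` becomes `v(a) * b' = 1`):
(1) if `v(x) < 0` then `v(γ(x)) = -e q^f v(x) - v(t)`;
(2) if `v(x) > 0` then `v(γ(x)) = e v(x) - v(t)`;
(3) if `v(x) = 0` and `v(x^{q^f} - x) > 0` then `v(γ(x)) = e v(x^{q^f} - x) - v(t)`;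
(4) if `v(x) = 0` and `v(x^{q^f} - x) = 0` then `v(γ(x)) = -e v((x^{q^f} - x)² - 1) - v(t)`. -/
theorem kochen_valuation_eq (K : Type*) [Field K] [NumberField K]
    (𝔭 : HeightOneSpectrum (𝓞 K)) (t : K) (ht : IsUniformizerAt K 𝔭 t)
    (e f : ℕ) (hf : 0 < f)
    (F : Type*) [Field F] [Algebra K F]
    (Γ₀ : Type*) [LinearOrderedCommGroupWithZero Γ₀] (v : Valuation F Γ₀)
    (hv : ∀ a : K, v (algebraMap K F a) ≤ 1 ↔ 𝔭.valuation K a ≤ 1)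
    (x : F) (hx : KochenDefinedAt F (resCard K 𝔭) f x) :
    (1 < v x →
      v (kochen F (resCard K 𝔭) e f (algebraMap K F t) x) *
        (v x ^ (e * resCard K 𝔭 ^ f) * v (algebraMap K F t)) = 1) ∧
    (v x < 1 →
      v (kochen F (resCard K 𝔭) e f (algebraMap K F t) x) =
        v x ^ e * (v (algebraMap K F t))⁻¹) ∧
    (v x = 1 → v (x ^ resCard K 𝔭 ^ f - x) < 1 →
      v (kochen F (resCard K 𝔭) e f (algebraMap K F t) x) =
        v (x ^ resCard K 𝔭 ^ f - x) ^ e * (v (algebraMap K F t))⁻¹) ∧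
    (v x = 1 → v (x ^ resCard K 𝔭 ^ f - x) = 1 →
      v (kochen F (resCard K 𝔭) e f (algebraMap K F t) x) *
        (v ((x ^ resCard K 𝔭 ^ f - x) ^ 2 - 1) ^ e * v (algebraMap K F t)) = 1) := by
  classical
  set q : ℕ := resCard K 𝔭 with hq
  set Q : ℕ := q ^ f with hQdef
  have hq2 : 2 ≤ q := resCard_two_le K 𝔭
  have hQ2 : 2 ≤ Q := le_trans hq2 (Nat.le_self_pow hf.ne' q)
  set y : F := x ^ Q - x with hy
  set D : F := y ^ 2 - 1 with hD
  have hD0 : D ≠ 0 := hx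
  have ht0 : t ≠ 0 := by
    intro h
    rw [IsUniformizerAt, h, map_zero] at ht
    exact WithZero.zero_ne_coe ht
  set T : Γ₀ := v (algebraMap K F t) with hT
  have hT0 : T ≠ 0 := v.ne_zero_iff.mpr (by
    simp only [ne_eq, map_eq_zero]; exact ht0)
  have hkochen : v (kochen F q e f (algebraMap K F t) x) = T⁻¹ * (v y / v D) ^ e := by
    rw [kochen, map_mul, map_inv₀, map_pow, map_div₀]
  refine ⟨?_, ?_, ?_, ?_⟩
  · -- case 1 : 1 < v x
    intro h1
    have hx0 : v x ≠ 0 := ne_of_gt (lt_trans zero_lt_one h1)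
    have hxQ : v x < v (x ^ Q) := by
      rw [map_pow]
      calc v x = v x ^ 1 := (pow_one _).symm
      _ < v x ^ Q := pow_lt_pow_right₀ h1 (by omega)
    have hvy : v y = v x ^ Q := by rw [hy, v.map_sub_eq_of_lt_left hxQ, map_pow]
    have h1y : (1 : Γ₀) < v y := by
      rw [hvy]; exact one_lt_pow₀ h1 (by omega)
    have hvD : v D = v y ^ 2 := by
      have : v 1 < v (y ^ 2) := by
        rw [map_one, map_pow]; exact one_lt_pow₀ h1y (by omega)
      rw [hD, v.map_sub_eq_of_lt_left this, map_pow]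
    rw [hkochen, hvD, hvy]
    have hb : (v x ^ Q) ^ e ≠ 0 := pow_ne_zero _ (pow_ne_zero _ hx0)
    have hdiv : v x ^ Q / (v x ^ Q) ^ 2 = (v x ^ Q)⁻¹ := by
      rw [sq, div_mul_eq_div_div, div_self (pow_ne_zero _ hx0), one_div]
    rw [hdiv, inv_pow, show v x ^ (e * Q) = (v x ^ Q) ^ e by rw [← pow_mul, mul_comm]]
    exact kochen_aux_cancel _ _ hb hT0
  · -- case 2 : v x < 1
    intro h1
    have hvy : v y = v x := by
      rcases eq_or_ne (v x) 0 with hx0 | hx0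
      · have : x = 0 := v.zero_iff.mp hx0
        rw [hy, this, zero_pow (by omega : Q ≠ 0), sub_zero]
      · have hxQ : v (x ^ Q) < v x := by
          rw [map_pow]
          have h2 : v x ^ (Q - 1) < 1 := pow_lt_one₀ zero_le' h1 (by omega)
          calc v x ^ Q = v x * v x ^ (Q - 1) := by rw [← pow_succ']; congr 1; omega
          _ < v x * 1 := mul_lt_mul_of_pos_left h2 (zero_lt_iff.mpr hx0)
          _ = v x := mul_one _
        rw [hy, v.map_sub_eq_of_lt_right hxQ]
    have hvD : v D = 1 := by
      have : v (y ^ 2) < v 1 := by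
        rw [map_one, map_pow, hvy]
        exact pow_lt_one₀ zero_le' h1 (by omega)
      rw [hD, v.map_sub_eq_of_lt_right this, map_one]
    rw [hkochen, hvD, hvy, div_one, mul_comm]
  · -- case 3 : v x = 1, v y < 1
    intro _ h2
    have hvD : v D = 1 := by
      have : v (y ^ 2) < v 1 := by
        rw [map_one, map_pow]
        exact pow_lt_one₀ zero_le' h2 (by omega)
      rw [hD, v.map_sub_eq_of_lt_right this, map_one]
    rw [hkochen, hvD, div_one, mul_comm]
  · -- case 4 : v x = 1, v y = 1
    intro _ h2
    have hvD0 : v D ≠ 0 := v.ne_zero_iff.mpr hD0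
    rw [hkochen, h2]
    have : (1 : Γ₀) / v D = (v D)⁻¹ := one_div _
    rw [this, inv_pow]
    exact kochen_aux_cancel _ _ (pow_ne_zero _ hvD0) hT0
end

section
/- Let K be a number field, 𝔭 a finite place of K with uniformizer t_𝔭 and residue field of size q, and τ = (e,f) ∈ ℕ². Let F/K be a field extension, 𝔓 ∈ S*_𝔭(F), and suppose x ∈ F is not a pole of γ^τ_{𝔭,t_𝔭} and satisfies either (i) 0 < (e+1)·v_𝔓(x) ≤ v_𝔓(t_𝔭), or (ii) v_𝔓(x) = 0 and [𝔽_q(res_𝔓(x)) : 𝔽_q] does not divide f, where res_𝔓(x) is the residue of x (equivalently: v_𝔓(x) = 0 and v_𝔓(x^{q^f}−x) = 0). Then (e+1)·v_𝔓(γ^τ_{𝔭,t_𝔭}(x)) ≤ −v_𝔓(t_𝔭); in particular v_𝔓(γ^τ_{𝔭,t_𝔭}(x)) < 0. -/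
set_option maxHeartbeats 1000000
set_option synthInstance.maxHeartbeats 1000000


open IsDedekindDomain NumberField
open scoped Multiplicative

section Aux

variable {G : Type*} [LinearOrderedCommGroupWithZero G]

private lemma kochen_aux_case1 (T a : G) (hT0 : T ≠ 0) (e : ℕ)
    (h1 : T ≤ a ^ (e + 1)) (h2 : a ^ (e + 1) < 1) :
    1 ≤ (T⁻¹ * a ^ e) ^ (e + 1) * T ∧ 1 < T⁻¹ * a ^ e := by
  have ha0 : a ≠ 0 := by
    rintro rfl
    rw [zero_pow (by omega)] at h1
    exact hT0 (le_zero_iff.mp h1)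
  have ha1 : a < 1 := by
    by_contra h
    exact absurd (Left.one_le_pow_of_le (le_of_not_gt h) (e + 1)) (not_le_of_gt h2)
  have hTpos : (0 : G) < T := zero_lt_iff.mpr hT0
  constructor
  · have key : (T⁻¹ * a ^ e) ^ (e + 1) * T = (T⁻¹ * a ^ (e + 1)) ^ e := by
      rw [mul_pow, mul_pow, ← pow_mul, ← pow_mul, Nat.mul_comm e (e + 1), pow_succ T⁻¹ e,
        mul_assoc, mul_assoc, mul_comm (a ^ ((e + 1) * e)) T, ← mul_assoc T⁻¹ T,
        inv_mul_cancel₀ hT0, one_mul]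
    rw [key]
    exact Left.one_le_pow_of_le ((one_le_inv_mul₀ hTpos).mpr h1) e
  · rw [one_lt_inv_mul₀ hTpos]
    calc T ≤ a ^ (e + 1) := h1
      _ = a ^ e * a := pow_succ a e
      _ < a ^ e := mul_lt_of_lt_one_right (zero_lt_iff.mpr (pow_ne_zero e ha0)) ha1

private lemma kochen_aux_case2 (T D : G) (hT0 : T ≠ 0) (hT1 : T < 1)
    (hD0 : D ≠ 0) (hD1 : D ≤ 1) (e : ℕ) :
    1 ≤ (T⁻¹ * (D⁻¹) ^ e) ^ (e + 1) * T ∧ 1 < T⁻¹ * (D⁻¹) ^ e := by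
  have hTpos : (0 : G) < T := zero_lt_iff.mpr hT0
  have hDpos : (0 : G) < D := zero_lt_iff.mpr hD0
  have hDinv : 1 ≤ D⁻¹ := (one_le_inv₀ hDpos).mpr hD1
  have hTinv : 1 < T⁻¹ := (one_lt_inv₀ hTpos).mpr hT1
  constructor
  · have key : (T⁻¹ * (D⁻¹) ^ e) ^ (e + 1) * T = (T⁻¹) ^ e * ((D⁻¹) ^ e) ^ (e + 1) := by
      rw [mul_pow, pow_succ T⁻¹ e, mul_assoc, mul_assoc,
        mul_comm (((D⁻¹) ^ e) ^ (e + 1)) T, ← mul_assoc T⁻¹ T, inv_mul_cancel₀ hT0, one_mul]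
    rw [key]
    exact one_le_mul (Left.one_le_pow_of_le hTinv.le e)
      (Left.one_le_pow_of_le (Left.one_le_pow_of_le hDinv e) (e + 1))
  · calc (1 : G) < T⁻¹ := hTinv
      _ = T⁻¹ * 1 := (mul_one _).symm
      _ ≤ T⁻¹ * (D⁻¹) ^ e :=
        mul_le_mul_right (Left.one_le_pow_of_le hDinv e) _

end Aux

/-- **Lemma (smallness of Kochen values).**
Let `F/K` be a field extension, `𝔓 ∈ S*_𝔭(F)` (represented by its valuation ring `O`), and
suppose `x ∈ F` is not a pole of `γ = γ^τ_{𝔭,t}` and satisfies either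
(i) `0 < (e+1) v_𝔓(x) ≤ v_𝔓(t)` (multiplicatively: `v t ≤ (v x)^{e+1} < 1`), or
(ii) `v_𝔓(x) = 0` and the residue of `x` generates a subfield of the residue field of degree
not dividing `f` over `𝔽_q` — equivalently, `v_𝔓(x) = 0` and `v_𝔓(x^{q^f} - x) = 0`.
Then `(e+1) v_𝔓(γ(x)) ≤ -v_𝔓(t)`, in particular `v_𝔓(γ(x)) < 0`  (multiplicatively:
`1 ≤ (v γ(x))^{e+1} * v t` and `1 < v (γ(x))`). -/
theorem kochen_valuation_lt_one (K : Type*) [Field K] [NumberField K]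
    (𝔭 : HeightOneSpectrum (𝓞 K)) (t : K) (ht : IsUniformizerAt K 𝔭 t)
    (e f : ℕ) (hf : 0 < f)
    (F : Type*) [Field F] [Algebra K F] (O : ValuationSubring F)
    (hO : IsPrimeAbove K 𝔭 F O)
    (x : F) (hx : KochenDefinedAt F (resCard K 𝔭) f x)
    (hcase :
      (O.valuation (algebraMap K F t) ≤ O.valuation x ^ (e + 1) ∧ O.valuation x ^ (e + 1) < 1) ∨
      (O.valuation x = 1 ∧ O.valuation (x ^ resCard K 𝔭 ^ f - x) = 1)) :
    1 ≤ O.valuation (kochen F (resCard K 𝔭) e f (algebraMap K F t) x) ^ (e + 1) *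
        O.valuation (algebraMap K F t) ∧
      1 < O.valuation (kochen F (resCard K 𝔭) e f (algebraMap K F t) x) := by
  classical
  -- basic facts about the residue cardinality
  have hnt : Nontrivial (𝓞 K ⧸ 𝔭.asIdeal) :=
    Ideal.Quotient.nontrivial_iff.mpr 𝔭.isPrime.ne_top
  have hq : 2 ≤ resCard K 𝔭 := by
    have hfin : Finite (𝓞 K ⧸ 𝔭.asIdeal) :=
      Ideal.finiteQuotientOfFreeOfNeBot _ 𝔭.ne_bot
    have := @Finite.one_lt_card (𝓞 K ⧸ 𝔭.asIdeal) hfin hnt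
    exact this
  set q : ℕ := resCard K 𝔭 with hqdef
  have hn2 : 2 ≤ q ^ f := le_trans hq (by
    calc q = q ^ 1 := (pow_one q).symm
      _ ≤ q ^ f := Nat.pow_le_pow_right (by omega) hf)
  set v := O.valuation with hv
  set T : F := algebraMap K F t with hT
  -- the uniformizer has valuation strictly less than 1 and nonzero
  have ht0 : t ≠ 0 := by
    intro h
    rw [IsUniformizerAt, h, map_zero] at ht
    exact (WithZero.coe_ne_zero (a := Multiplicative.ofAdd (-1 : ℤ))) ht.symm
  have hT0 : v T ≠ 0 := by
    rw [hv, hT, (Valuation.ne_zero_iff _)]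
    simpa using ht0
  have hT1 : v T < 1 := by
    have hmem := (hO.2.2.2 t⁻¹).not
    have hval : ¬ 𝔭.valuation K (t⁻¹ : K) ≤ 1 := by
      rw [map_inv₀, ht]
      rw [← WithZero.coe_inv, ← WithZero.coe_one, WithZero.coe_le_coe]
      intro h
      rw [← ofAdd_neg, neg_neg, ← ofAdd_zero, Multiplicative.ofAdd_le] at h
      omega
    have hnmem : algebraMap K F t⁻¹ ∉ O := fun h => hval ((hO.2.2.2 t⁻¹).mp h)
    rw [map_inv₀] at hnmem
    have h1 : ¬ v T⁻¹ ≤ 1 := fun h =>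
      hnmem (O.mem_of_valuation_le_one _ h)
    rw [map_inv₀] at h1
    have := lt_of_not_ge h1
    rwa [one_lt_inv₀ (zero_lt_iff.mpr hT0)] at this
  -- abbreviations
  set y : F := x ^ q ^ f - x with hy
  set D : F := y ^ 2 - 1 with hD
  have hD0 : D ≠ 0 := hx
  rcases hcase with ⟨h1, h2⟩ | ⟨h1, h2⟩
  · -- Case (i)
    have hx0 : v x ≠ 0 := by
      intro h
      rw [h, zero_pow (by omega)] at h1
      exact hT0 (le_zero_iff.mp h1)
    have hx1 : v x < 1 := by
      by_contra h
      exact absurd (Left.one_le_pow_of_le (le_of_not_gt h) (e + 1)) (not_le_of_gt h2)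
    -- v (x ^ (q ^ f)) < v x
    have hxn : v (x ^ q ^ f) < v x := by
      obtain ⟨m, hm⟩ : ∃ m, q ^ f = m + 2 := ⟨q ^ f - 2, by omega⟩
      rw [map_pow, hm, pow_succ]
      exact mul_lt_of_lt_one_left (zero_lt_iff.mpr hx0)
        (pow_lt_one₀ zero_le' hx1 (by omega))
    have hvy : v y = v x := Valuation.map_sub_eq_of_lt_right _ hxn
    have hvD : v D = 1 := by
      have hsq : v (y ^ 2) < v (1 : F) := by
        rw [map_pow, hvy, map_one]
        exact pow_lt_one₀ zero_le' hx1 (by omega)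
      have := Valuation.map_sub_eq_of_lt_right _ hsq
      rwa [map_one] at this
    have hval : v (kochen F q e f T x) = (v T)⁻¹ * (v x) ^ e := by
      rw [kochen, map_mul, map_inv₀, map_pow, map_div₀, ← hy, ← hD, hvy, hvD, div_one]
    rw [hval]
    exact kochen_aux_case1 (v T) (v x) hT0 e h1 h2
  · -- Case (ii)
    have hvD0 : v D ≠ 0 := (Valuation.ne_zero_iff _).mpr hD0
    have hvD1 : v D ≤ 1 := by
      have := Valuation.map_sub v (y ^ 2) 1
      rw [map_pow, h2, map_one, one_pow, max_self] at this
      exact this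
    have hval : v (kochen F q e f T x) = (v T)⁻¹ * ((v D)⁻¹) ^ e := by
      rw [kochen, map_mul, map_inv₀, map_pow, map_div₀, ← hy, ← hD, h2, one_div]
    rw [hval]
    exact kochen_aux_case2 (v T) (v D) hT0 hT1 hvD0 hvD1 e
end

section
/- Let K be a field, let f_1, …, f_r ∈ K[X_1,…,X_n, Y_1,…,Y_m], and let l ∈ ℕ. Then for every field extension F/K and every nonzero commutative unital F-algebra B of dimension at most l as an F-vector space, F^n ∩ P_{f_1^l,…,f_r^l}(B) = ⋂_{𝔪 ∈ MaxSpec(B)} ( F^n ∩ P_{f_1,…,f_r}(B/𝔪) ), where for a commutative F-algebra C, P_{g_1,…,g_r}(C) := { x ∈ C^n : ∃ y ∈ C^m with g_1(x,y) = ⋯ = g_r(x,y) = 0 }, F is identified with its image in C under the structure map, and F^n ∩ P(C) denotes the set of tuples in F^n whose image in C^n lies in P(C). -/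
/-- For polynomials `g_1, …, g_r ∈ K[X_1,…,X_n, Y_1,…,Y_m]` and a commutative `K`-algebra `C`,
the set `P_{g_1,…,g_r}(C) = { x ∈ C^n | ∃ y ∈ C^m, g_1(x,y) = ⋯ = g_r(x,y) = 0 }`. -/
def Pset {K : Type*} [CommRing K] {n m r : ℕ}
    (g : Fin r → MvPolynomial (Fin n ⊕ Fin m) K)
    (C : Type*) [CommRing C] [Algebra K C] : Set (Fin n → C) :=
  {x | ∃ y : Fin m → C, ∀ i, MvPolynomial.aeval (Sum.elim x y) (g i) = 0}

/-- A nilpotent element of a finite-dimensional algebra over a field is killed by the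
`finrank`-th power. -/
lemma pow_finrank_eq_zero_of_isNilpotent {F B : Type*} [Field F] [CommRing B] [Algebra F B]
    [Module.Finite F B] {b : B} (h : IsNilpotent b) : b ^ Module.finrank F B = 0 := by
  have hφ : IsNilpotent (LinearMap.mulLeft F b) :=
    (LinearMap.isNilpotent_mulLeft_iff F b).mpr h
  have h2 : (LinearMap.mulLeft F b) ^ Module.finrank F B = 0 := by
    have h3 := LinearMap.aeval_self_charpoly (LinearMap.mulLeft F b)
    rw [hφ.charpoly_eq_X_pow_finrank, Polynomial.aeval_X_pow] at h3
    exact h3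
  rw [LinearMap.pow_mulLeft] at h2
  calc b ^ Module.finrank F B = (LinearMap.mulLeft F (b ^ Module.finrank F B)) 1 := by simp
    _ = 0 := by rw [h2]; simp

/-- **Lemma.**  Let `K` be a field, `f_1, …, f_r ∈ K[X_1,…,X_n, Y_1,…,Y_m]` and `l ∈ ℕ`.
For every field extension `F/K` and every nonzero commutative unital `F`-algebra `B` of
dimension at most `l` as an `F`-vector space,
`F^n ∩ P_{f_1^l,…,f_r^l}(B) = ⋂_{𝔪 ∈ MaxSpec B} (F^n ∩ P_{f_1,…,f_r}(B/𝔪))`,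
where `F` is identified with its image in `B` and in the quotient fields `B/𝔪`. -/
theorem Pset_pow_eq_iInter_maximal {K : Type*} [Field K] {n m r : ℕ}
    (f : Fin r → MvPolynomial (Fin n ⊕ Fin m) K) (l : ℕ)
    (F : Type*) [Field F] [Algebra K F]
    (B : Type*) [CommRing B] [Algebra K B] [Algebra F B] [IsScalarTower K F B]
    [Nontrivial B] [Module.Finite F B] (hl : Module.finrank F B ≤ l) :
    {x : Fin n → F | (fun i => algebraMap F B (x i)) ∈ Pset (fun i => (f i) ^ l) B} =
      ⋂ 𝔪 ∈ {I : Ideal B | I.IsMaximal},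
        {x : Fin n → F | (fun i => algebraMap F (B ⧸ 𝔪) (x i)) ∈ Pset f (B ⧸ 𝔪)} := by
  have hl0 : l ≠ 0 := by
    have := Module.finrank_pos (R := F) (M := B)
    omega
  haveI : IsArtinianRing B := isArtinian_of_tower F inferInstance
  ext x
  simp only [Set.mem_setOf_eq, Set.mem_iInter, Pset]
  constructor
  · rintro ⟨y, hy⟩ 𝔪 hm
    haveI : 𝔪.IsMaximal := hm
    refine ⟨fun j => Ideal.Quotient.mk 𝔪 (y j), fun i => ?_⟩
    have key : (Ideal.Quotient.mkₐ K 𝔪)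
        (MvPolynomial.aeval (Sum.elim (fun i => algebraMap F B (x i)) y) (f i)) =
        MvPolynomial.aeval
          (Sum.elim (fun i => algebraMap F (B ⧸ 𝔪) (x i)) (fun j => Ideal.Quotient.mk 𝔪 (y j)))
          (f i) := by
      rw [MvPolynomial.comp_aeval_apply]
      have hfun : (fun s => (Ideal.Quotient.mkₐ K 𝔪) (Sum.elim (fun i => algebraMap F B (x i)) y s))
          = Sum.elim (fun i => algebraMap F (B ⧸ 𝔪) (x i))
              (fun j => Ideal.Quotient.mk 𝔪 (y j)) := by
        funext s
        cases s with
        | inl a =>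
            simp only [Sum.elim_inl, Ideal.Quotient.mkₐ_eq_mk]
            rw [IsScalarTower.algebraMap_apply F B (B ⧸ 𝔪)]
            rfl
        | inr a => simp
      rw [hfun]
    have hpow : (MvPolynomial.aeval (Sum.elim (fun i => algebraMap F B (x i)) y) (f i)) ^ l
        = 0 := by
      have := hy i
      rwa [map_pow] at this
    have : (MvPolynomial.aeval
        (Sum.elim (fun i => algebraMap F (B ⧸ 𝔪) (x i)) (fun j => Ideal.Quotient.mk 𝔪 (y j)))
        (f i)) ^ l = 0 := by
      rw [← key, ← map_pow, hpow, map_zero]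
    exact pow_eq_zero_iff hl0 |>.mp this
  · intro h
    haveI : Finite {I : Ideal B | I.IsMaximal} := (IsArtinianRing.setOfPred_isMaximal_finite B).to_subtype
    set S := {I : Ideal B | I.IsMaximal}
    choose ymap hymap using fun (𝔪 : S) => h 𝔪.1 𝔪.2
    have hcop : Pairwise (Function.onFun IsCoprime fun (𝔪 : S) => 𝔪.1) := fun 𝔪 𝔪' hne =>
      Ideal.isCoprime_iff_sup_eq.mpr <| 𝔪.2.coprime_of_ne 𝔪'.2 <| by
        rwa [Ne, Subtype.coe_inj]
    have key : ∀ j : Fin m, ∃ b : B, ∀ 𝔪 : S, Ideal.Quotient.mk 𝔪.1 b = ymap 𝔪 j := by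
      intro j
      obtain ⟨z, hz⟩ := Ideal.quotientInfToPiQuotient_surj hcop (fun 𝔪 => ymap 𝔪 j)
      obtain ⟨b, rfl⟩ := Ideal.Quotient.mk_surjective z
      refine ⟨b, fun 𝔪 => ?_⟩
      rw [← Ideal.quotientInfToPiQuotient_mk' (fun (𝔪 : S) => 𝔪.1) b 𝔪, hz]
    choose yB hyB using key
    refine ⟨yB, fun i => ?_⟩
    set b := MvPolynomial.aeval (Sum.elim (fun i => algebraMap F B (x i)) yB) (f i) with hb
    have hbmem : ∀ 𝔪 : S, b ∈ 𝔪.1 := by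
      intro 𝔪
      haveI : 𝔪.1.IsMaximal := 𝔪.2
      rw [← Ideal.Quotient.eq_zero_iff_mem]
      have key2 : (Ideal.Quotient.mkₐ K 𝔪.1) b =
          MvPolynomial.aeval
            (Sum.elim (fun i => algebraMap F (B ⧸ 𝔪.1) (x i)) (ymap 𝔪)) (f i) := by
        rw [hb, MvPolynomial.comp_aeval_apply]
        have hfun : (fun s => (Ideal.Quotient.mkₐ K 𝔪.1)
              (Sum.elim (fun i => algebraMap F B (x i)) yB s))
            = Sum.elim (fun i => algebraMap F (B ⧸ 𝔪.1) (x i)) (ymap 𝔪) := by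
          funext s
          cases s with
          | inl a =>
              simp only [Sum.elim_inl, Ideal.Quotient.mkₐ_eq_mk]
              rw [IsScalarTower.algebraMap_apply F B (B ⧸ 𝔪.1)]
              rfl
          | inr a =>
              simp only [Sum.elim_inr, Ideal.Quotient.mkₐ_eq_mk]
              exact hyB a 𝔪
        rw [hfun]
      have := hymap 𝔪 i
      rw [← Ideal.Quotient.mkₐ_eq_mk K, key2]
      exact this
    have hbnil : IsNilpotent b := by
      obtain ⟨k, hk⟩ := IsArtinianRing.isNilpotent_jacobson_bot (R := B)
      refine ⟨k, ?_⟩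
      have hbjac : b ∈ Ideal.jacobson (⊥ : Ideal B) := by
        rw [Ideal.jacobson]
        exact Ideal.mem_sInf.mpr fun {J} hJ => hbmem ⟨J, hJ.2⟩
      have := Ideal.pow_mem_pow hbjac k
      rw [hk] at this
      simpa using this
    have hfr : b ^ Module.finrank F B = 0 := pow_finrank_eq_zero_of_isNilpotent hbnil
    have hbl : b ^ l = 0 := pow_eq_zero_of_le hl hfr
    rw [map_pow]
    exact hbl
end
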